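/- arXiv:1704.07824 — 15 statements merged into one kernel-verified Lean document; each statement's English description precedes it below -/
import Mathlib

section
/- Every infinite metric space (X,d) whose scale d(X,X) = {d(x,y) : x,y ∈ X} is finite contains a countably infinite equidistance subset. -/
/-!
Colour each pair `{x, y}` by `d(x, y)`; the scale being finite, only finitely many colours occur,
so the infinite Ramsey theorem for pairs yields an infinite set on which all distances agree.
Ramsey's theorem is proved in its usual form: choose a point of an infinite set, keep the
infinitely many remaining points joined to it by one colour, and iterate. This gives a sequence
in which the colour of `(a m, a n)`, `m < n`, depends only on `m`; a colour repeated infinitely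
often along the sequence gives the homogeneous subsequence.
-/

/-- A subset `Y` of a metric space is an equidistance subset if there is `r > 0`
such that any two distinct points of `Y` are at distance `r`. -/
def EquidistanceSubset {X : Type*} [MetricSpace X] (Y : Set X) : Prop :=
  ∃ r : ℝ, 0 < r ∧ ∀ x ∈ Y, ∀ y ∈ Y, x ≠ y → dist x y = r

open Set Function Filter

theorem Set.Infinite.exists_infinite_fiber_of_mapsTo {α β : Type*} {s : Set α} {t : Set β}
    {f : α → β} (hs : s.Infinite) (hf : MapsTo f s t) (ht : t.Finite) :
    ∃ b ∈ t, (s ∩ f ⁻¹' {b}).Infinite := by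
  by_contra! h
  exact hs <| (ht.biUnion h).subset fun x hx => mem_biUnion (hf hx) ⟨hx, rfl⟩

namespace Ramsey

variable {X C : Type*} (c : X → X → C)

theorem exists_pivot (hc : (range fun p : X × X => c p.1 p.2).Finite) {A : Set X}
    (hA : A.Infinite) : ∃ a ∈ A, ∃ k : C, ((A \ {a}) ∩ c a ⁻¹' {k}).Infinite := by
  obtain ⟨a, ha⟩ := hA.nonempty
  obtain ⟨k, -, hk⟩ := (hA.sdiff (finite_singleton a)).exists_infinite_fiber_of_mapsTo
    (fun y _ => mem_range_self (a, y) : MapsTo (c a) _ _) hc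
  exact ⟨a, ha, k, hk⟩

theorem injective_and_colour_eq_of_nested {a : ℕ → X} {k : ℕ → C} {S : ℕ → Set X}
    (ha : ∀ n, a n ∈ S n) (hS : ∀ n, S (n + 1) ⊆ (S n \ {a n}) ∩ c (a n) ⁻¹' {k n}) :
    Injective a ∧ ∀ m n, m < n → c (a m) (a n) = k m := by
  have hanti : Antitone S :=
    antitone_nat_of_succ_le fun n => (hS n).trans (inter_subset_left.trans sdiff_subset)
  have hlater : ∀ m n, m < n → a n ∈ (S m \ {a m}) ∩ c (a m) ⁻¹' {k m} :=
    fun m n hmn => hS m (hanti (Nat.succ_le_of_lt hmn) (ha n))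
  exact ⟨Injective.of_lt_imp_ne fun m n hmn => Ne.symm (hlater m n hmn).1.2,
    fun m n hmn => (hlater m n hmn).2⟩

theorem exists_injective_colour_eq_left [Infinite X]
    (hc : (range fun p : X × X => c p.1 p.2).Finite) :
    ∃ a : ℕ → X, ∃ k : ℕ → C, Injective a ∧ ∀ m n, m < n → c (a m) (a n) = k m := by
  choose pivot hpivot colour hcolour using
    fun A : {A : Set X // A.Infinite} => exists_pivot c hc A.2
  let next (A : {A : Set X // A.Infinite}) : {A : Set X // A.Infinite} :=
    ⟨(A.1 \ {pivot A}) ∩ c (pivot A) ⁻¹' {colour A}, hcolour A⟩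
  let S (n : ℕ) := next^[n] ⟨univ, infinite_univ⟩
  refine ⟨fun n => pivot (S n), fun n => colour (S n),
    injective_and_colour_eq_of_nested c (S := fun n => (S n).1) (fun n => hpivot (S n)) ?_⟩
  intro n
  simp only [S, iterate_succ_apply', subset_refl, next]

theorem exists_injective_colour_eq [Infinite X]
    (hc : (range fun p : X × X => c p.1 p.2).Finite) :
    ∃ a : ℕ → X, Injective a ∧ ∃ k : C, ∀ m n, m < n → c (a m) (a n) = k := by
  obtain ⟨a, k, ha, hak⟩ := exists_injective_colour_eq_left c hc
  have hk : MapsTo k univ (range fun p : X × X => c p.1 p.2) :=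
    fun m _ => ⟨(a m, a (m + 1)), hak m (m + 1) m.lt_succ_self⟩
  obtain ⟨k₀, -, hk₀⟩ := infinite_univ.exists_infinite_fiber_of_mapsTo hk hc
  obtain ⟨φ, hφ, hφk⟩ := extraction_of_frequently_atTop
    ((Nat.frequently_atTop_iff_infinite (p := (k · = k₀))).2 (by rwa [univ_inter] at hk₀))
  exact ⟨a ∘ φ, ha.comp hφ.injective, k₀, fun m n hmn => (hak _ _ (hφ hmn)).trans (hφk m)⟩

end Ramsey

/-- Every infinite metric space with finite scale `d(X,X)` contains a countably
infinite equidistance subset. -/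
theorem stmt0 {X : Type*} [MetricSpace X] [Infinite X]
    (hscale : (Set.range fun p : X × X => dist p.1 p.2).Finite) :
    ∃ Y : Set X, Y.Countable ∧ Y.Infinite ∧ EquidistanceSubset Y := by
  obtain ⟨a, ha, r, hr⟩ := Ramsey.exists_injective_colour_eq dist hscale
  refine ⟨range a, countable_range a, infinite_range_of_injective ha, r,
    hr 0 1 zero_lt_one ▸ dist_pos.2 (ha.ne zero_ne_one), ?_⟩
  rintro _ ⟨m, rfl⟩ _ ⟨n, rfl⟩ hne
  rcases lt_or_gt_of_ne (ne_of_apply_ne a hne) with hmn | hnm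
  · exact hr m n hmn
  · rw [dist_comm, hr n m hnm]
end

section
/- Let (X,d) be an infinite ultrametric space whose scale d(X,X) is finite. If the cardinal |X| is regular, then X contains an equidistance subset Y with |Y| = |X|. -/
/-!
Let `r` be the largest distance. By the ultrametric inequality the open `r`-balls partition the
space, and points in distinct balls are exactly `r` apart. If there are `|X|` balls, one point from
each is the required set. Otherwise the infinite pigeonhole principle, which for regular `|X|`
applies to any family of fewer than `|X|` sets, yields a ball of cardinality `|X|`; its scale
misses `r`, so we conclude by induction on the size of the scale.
-/

open Metric Cardinal

def scale (X : Type*) [PseudoMetricSpace X] : Set ℝ :=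
  Set.range fun p : X × X => dist p.1 p.2

lemma scale_subtype_subset {X : Type*} [PseudoMetricSpace X] (s : Set X) :
    scale s ⊆ scale X := by
  rintro _ ⟨⟨x, y⟩, rfl⟩
  exact ⟨(x, y), rfl⟩

lemma exists_isGreatest_scale {X : Type*} [MetricSpace X] [Nontrivial X]
    (hfin : (scale X).Finite) : ∃ r, 0 < r ∧ IsGreatest (scale X) r := by
  obtain ⟨x, y, hxy⟩ := exists_pair_ne X
  have hne : (scale X).Nonempty := ⟨_, ⟨(x, y), rfl⟩⟩
  refine ⟨sSup (scale X), ?_, hne.csSup_mem hfin, fun _ ↦ (le_csSup hfin.bddAbove ·)⟩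
  exact (dist_pos.mpr hxy).trans_le (le_csSup hfin.bddAbove ⟨(x, y), rfl⟩)

lemma EquidistanceSubset.image_of_isometry {X Y : Type*} [MetricSpace X] [MetricSpace Y]
    {f : X → Y} (hf : Isometry f) {Z : Set X} (hZ : EquidistanceSubset Z) :
    EquidistanceSubset (f '' Z) := by
  obtain ⟨r, hr, hZ⟩ := hZ
  refine ⟨r, hr, ?_⟩
  rintro _ ⟨x, hx, rfl⟩ _ ⟨y, hy, rfl⟩ hxy
  rw [hf.dist_eq]
  exact hZ x hx y hy (ne_of_apply_ne f hxy)

namespace IsUltrametricDist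

variable {X : Type*} [MetricSpace X] [IsUltrametricDist X]

lemma ball_eq_ball_iff {x y : X} {r : ℝ} (hr : 0 < r) : ball y r = ball x r ↔ y ∈ ball x r :=
  ⟨fun h ↦ h ▸ mem_ball_self hr, fun h ↦ (ball_eq_of_mem h).symm⟩

lemma rangeFactorization_ball_preimage {x : X} {r : ℝ} (hr : 0 < r) :
    Set.rangeFactorization (fun y ↦ ball y r) ⁻¹' {⟨ball x r, x, rfl⟩} = ball x r :=
  Set.ext fun _ ↦ Subtype.ext_iff.trans (ball_eq_ball_iff hr)

lemma scale_ball_ssubset {x : X} {r : ℝ} (hr : r ∈ scale X) : scale (ball x r) ⊂ scale X := by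
  refine ssubset_of_subset_not_subset (scale_subtype_subset _) fun h ↦ ?_
  obtain ⟨⟨⟨y, hy⟩, ⟨z, hz⟩⟩, hyz⟩ := h hr
  refine (dist_triangle_max y x z).not_gt ?_
  replace hyz : dist y z = r := hyz
  rw [hyz]
  exact max_lt (mem_ball.mp hy) (mem_ball'.mp hz)

lemma equidistanceSubset_range_rangeSplitting_ball {r : ℝ} (hr : 0 < r)
    (hmax : ∀ x y : X, dist x y ≤ r) :
    EquidistanceSubset (Set.range (Set.rangeSplitting fun x : X ↦ ball x r)) := by
  refine ⟨r, hr, ?_⟩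
  rintro _ ⟨B, rfl⟩ _ ⟨C, rfl⟩ hBC
  refine (hmax _ _).antisymm (not_lt.mp fun h ↦ hBC (congrArg _ (Subtype.ext ?_)))
  rw [← Set.apply_rangeSplitting (fun x : X ↦ ball x r) B,
    ← Set.apply_rangeSplitting (fun x : X ↦ ball x r) C]
  exact (ball_eq_ball_iff hr).mpr h

theorem exists_equidistanceSubset_mk_eq (Y : Type*) [MetricSpace Y] [IsUltrametricDist Y]
    (hfin : (scale Y).Finite) (hreg : (#Y).IsRegular) :
    ∃ Z : Set Y, EquidistanceSubset Z ∧ #Z = #Y := by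
  have : Infinite Y := infinite_iff.mpr hreg.aleph0_le
  obtain ⟨r, hr, hr_mem, hr_max⟩ := exists_isGreatest_scale hfin
  rcases (mk_range_le : #(Set.range fun y : Y ↦ ball y r) ≤ #Y).lt_or_eq with hlt | heq
  · obtain ⟨⟨_, x, rfl⟩, hB⟩ := infinite_pigeonhole (Set.rangeFactorization fun y : Y ↦ ball y r)
      hreg.aleph0_le (hreg.cof_ord.symm ▸ hlt)
    rw [rangeFactorization_ball_preimage hr] at hB
    obtain ⟨Z, hZ, hZcard⟩ := exists_equidistanceSubset_mk_eq (ball x r)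
      (hfin.subset (scale_subtype_subset _)) (hB ▸ hreg)
    exact ⟨Subtype.val '' Z, hZ.image_of_isometry isometry_subtype_coe,
      (mk_image_eq Subtype.val_injective).trans (hZcard.trans hB)⟩
  · exact ⟨_, equidistanceSubset_range_rangeSplitting_ball hr fun x y ↦ hr_max ⟨(x, y), rfl⟩,
      (mk_range_eq _ (Set.rangeSplitting_injective _)).trans heq⟩
termination_by (scale Y).ncard
decreasing_by exact Set.ncard_lt_ncard (scale_ball_ssubset hr_mem) hfin

end IsUltrametricDist

theorem stmt1_general {X : Type*} [MetricSpace X]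
    (hultra : ∀ x y z : X, dist x z ≤ max (dist x y) (dist y z))
    (hscale : (Set.range fun p : X × X => dist p.1 p.2).Finite)
    (hreg : (Cardinal.mk X).IsRegular) :
    ∃ Y : Set X, EquidistanceSubset Y ∧ Cardinal.mk Y = Cardinal.mk X :=
  have : IsUltrametricDist X := ⟨hultra⟩
  IsUltrametricDist.exists_equidistanceSubset_mk_eq X hscale hreg

/-- An infinite ultrametric space with finite scale whose cardinality is a regular
cardinal contains an equidistance subset of full cardinality. -/
theorem stmt1 {X : Type*} [MetricSpace X] [Infinite X]
    (hultra : ∀ x y z : X, dist x z ≤ max (dist x y) (dist y z))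
    (hscale : (Set.range fun p : X × X => dist p.1 p.2).Finite)
    (hreg : (Cardinal.mk X).IsRegular) :
    ∃ Y : Set X, EquidistanceSubset Y ∧ Cardinal.mk Y = Cardinal.mk X :=
  stmt1_general hultra hscale hreg
end

section
/- Let (X,d) be an infinite ultrametric space whose scale d(X,X) is finite. If the cardinal |X| is singular, then for every cardinal κ < |X| there exists an equidistance subset of X of cardinality κ. -/
/-!
Fix a regular cardinal `θ ≤ |B|` and suppose all distances in `B` are at most `s`. By
ultrametricity, `d(x, y) < s` is an equivalence relation on `B`, and representatives of distinct
classes are at distance exactly `s`. So either there are at least `θ` classes, giving an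
equidistance set of size `θ`, or, by the pigeonhole principle for the regular cardinal `θ`, some
class has size `θ`, and its distances are bounded by the next smaller element of the finite scale.
This descent must stop. Every `κ < |X|` lies below a regular `θ ≤ |X|`, namely `ℵ₀` or `κ⁺`.
-/

universe u

open Cardinal Set

theorem Cardinal.exists_isRegular_between {κ μ : Cardinal.{u}} (hκμ : κ < μ) (hμ : ℵ₀ ≤ μ) :
    ∃ θ : Cardinal.{u}, θ.IsRegular ∧ κ ≤ θ ∧ θ ≤ μ := by
  rcases lt_or_ge κ ℵ₀ with hκ | hκ
  · exact ⟨ℵ₀, isRegular_aleph0, hκ.le, hμ⟩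
  · exact ⟨Order.succ κ, isRegular_succ hκ, Order.le_succ κ, Order.succ_le_of_lt hκμ⟩

theorem EquidistanceSubset.mono {X : Type*} [MetricSpace X] {Y Z : Set X}
    (hY : EquidistanceSubset Y) (hZY : Z ⊆ Y) : EquidistanceSubset Z := by
  obtain ⟨r, hr, hY⟩ := hY
  exact ⟨r, hr, fun x hx y hy => hY x (hZY hx) y (hZY hy)⟩

namespace IsUltrametricDist

def ballSetoid (X : Type*) [PseudoMetricSpace X] [IsUltrametricDist X] {r : ℝ} (hr : 0 < r) :
    Setoid X where
  r x y := dist x y < r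
  iseqv :=
    { refl := fun x => by simpa using hr
      symm := fun h => by rwa [dist_comm]
      trans := fun hxy hyz => (dist_triangle_max _ _ _).trans_lt (max_lt hxy hyz) }

end IsUltrametricDist

section

variable {X : Type u} [MetricSpace X] [IsUltrametricDist X]

theorem exists_equidistanceSubset_or_exists_dist_lt {θ : Cardinal.{u}} (hθ : θ.IsRegular)
    {B : Set X} (hB : θ ≤ #B) {s : ℝ} (hs : ∀ x ∈ B, ∀ y ∈ B, dist x y ≤ s) :
    (∃ Y ⊆ B, EquidistanceSubset Y ∧ θ ≤ #Y) ∨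
      ∃ C ⊆ B, θ ≤ #C ∧ ∀ x ∈ C, ∀ y ∈ C, dist x y < s := by
  obtain ⟨x, y, hxy⟩ := one_lt_iff_nontrivial.mp ((hθ.nat_lt 1).trans_le hB)
  have hs₀ : 0 < s := (dist_pos.mpr (Subtype.coe_injective.ne hxy)).trans_le (hs _ x.2 _ y.2)
  let S := IsUltrametricDist.ballSetoid B hs₀
  rcases le_or_gt θ #(Quotient S) with hmany | hfew
  · left
    refine ⟨range fun q : Quotient S => (q.out : X), ?_, ⟨s, hs₀, ?_⟩, ?_⟩
    · rintro _ ⟨q, rfl⟩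
      exact q.out.2
    · rintro _ ⟨p, rfl⟩ _ ⟨q, rfl⟩ hpq
      refine (hs _ p.out.2 _ q.out.2).antisymm (not_lt.mp fun hlt => hpq ?_)
      rw [← Quotient.out_eq p, ← Quotient.out_eq q, Quotient.sound (s := S) hlt]
    · rwa [mk_range_eq (fun q : Quotient S => (q.out : X))
        (Subtype.val_injective.comp Quotient.out_injective)]
  · right
    obtain ⟨q, hq⟩ := infinite_pigeonhole_card (Quotient.mk S) θ hB hθ.aleph0_le
      (hθ.cof_ord.symm ▸ hfew)
    refine ⟨Subtype.val '' (Quotient.mk S ⁻¹' {q}), image_subset_iff.mpr fun x _ => x.2,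
      (mk_image_eq Subtype.val_injective).symm ▸ hq, ?_⟩
    rintro _ ⟨x, hx, rfl⟩ _ ⟨y, hy, rfl⟩
    exact Quotient.exact (hx.trans hy.symm)

theorem exists_equidistanceSubset_le_mk_of_dist_le
    (hscale : (range fun p : X × X => dist p.1 p.2).Finite) {θ : Cardinal.{u}}
    (hθ : θ.IsRegular) {s : ℝ} (hsD : s ∈ range fun p : X × X => dist p.1 p.2)
    {B : Set X} (hB : θ ≤ #B) (hs : ∀ x ∈ B, ∀ y ∈ B, dist x y ≤ s) :
    ∃ Y ⊆ B, EquidistanceSubset Y ∧ θ ≤ #Y := by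
  set D := range fun p : X × X => dist p.1 p.2
  have := hscale.to_subtype
  lift s to D using hsD
  induction s using WellFoundedLT.induction generalizing B with | ind s ih => ?_
  obtain hY | ⟨C, hCB, hC, hCs⟩ := exists_equidistanceSubset_or_exists_dist_lt hθ hB hs
  · exact hY
  obtain ⟨x, hx⟩ := mk_ne_zero_iff.mp (hθ.pos.trans_le hC).ne'
  obtain ⟨s', ⟨hs'D, hs's⟩, hmax⟩ := exists_max_image (D ∩ Iio s) id (hscale.inter_of_left _)
    ⟨dist x x, ⟨(x, x), rfl⟩, hCs x hx x hx⟩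
  obtain ⟨Y, hYC, hY, hθY⟩ := ih ⟨s', hs'D⟩ hs's hC
    fun x hx y hy => hmax _ ⟨⟨(x, y), rfl⟩, hCs x hx y hy⟩
  exact ⟨Y, hYC.trans hCB, hY, hθY⟩

theorem exists_equidistanceSubset_le_mk
    (hscale : (range fun p : X × X => dist p.1 p.2).Finite) {θ : Cardinal.{u}}
    (hθ : θ.IsRegular) (hθX : θ ≤ #X) : ∃ Y : Set X, EquidistanceSubset Y ∧ θ ≤ #Y := by
  have : Nonempty X := mk_ne_zero_iff.mp (hθ.pos.trans_le hθX).ne'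
  obtain ⟨s, hsD, hmax⟩ := exists_max_image _ id hscale (range_nonempty _)
  obtain ⟨Y, -, hY⟩ := exists_equidistanceSubset_le_mk_of_dist_le hscale hθ hsD
    (B := univ) (by rwa [mk_univ]) fun x _ y _ => hmax _ ⟨(x, y), rfl⟩
  exact ⟨Y, hY⟩

end

theorem stmt2_general {X : Type u} [MetricSpace X] [Infinite X]
    (hultra : ∀ x y z : X, dist x z ≤ max (dist x y) (dist y z))
    (hscale : (Set.range fun p : X × X => dist p.1 p.2).Finite) :
    ∀ κ : Cardinal.{u}, κ < Cardinal.mk X →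
      ∃ Y : Set X, EquidistanceSubset Y ∧ Cardinal.mk Y = κ := by
  intro κ hκ
  have : IsUltrametricDist X := ⟨hultra⟩
  obtain ⟨θ, hθ, hκθ, hθX⟩ := exists_isRegular_between hκ (aleph0_le_mk X)
  obtain ⟨Y, hY, hθY⟩ := exists_equidistanceSubset_le_mk hscale hθ hθX
  obtain ⟨Z, hZY, hZ⟩ := le_mk_iff_exists_subset.mp (hκθ.trans hθY)
  exact ⟨Z, hY.mono hZY, hZ⟩

/-- In an infinite ultrametric space with finite scale whose cardinality is a
singular cardinal, for every cardinal `κ < |X|` there is an equidistance subset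
of cardinality `κ`. -/
theorem stmt2 {X : Type u} [MetricSpace X] [Infinite X]
    (hultra : ∀ x y z : X, dist x z ≤ max (dist x y) (dist y z))
    (hscale : (Set.range fun p : X × X => dist p.1 p.2).Finite)
    (hsing : ¬ (Cardinal.mk X).IsRegular) :
    ∀ κ : Cardinal.{u}, κ < Cardinal.mk X →
      ∃ Y : Set X, EquidistanceSubset Y ∧ Cardinal.mk Y = κ :=
  stmt2_general hultra hscale
end

section
/- For every singular infinite cardinal κ there exists an ultrametric space (X,d) with |X| = κ and scale d(X,X) = {0,1,2} such that every equidistance subset Y of X has cardinality |Y| < κ. -/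
/-!
Cut a singular `κ` into `cf κ < κ` blocks of size `< κ`: send each ordinal below `κ` to a larger
point of a cofinal set of size `cf κ`, so that each block lies in a proper initial segment. Distance
`1` inside a block and `2` across blocks is an ultrametric. An equidistance set at distance `1` lies
in one block, and one at distance `2` meets each block at most once, so neither reaches `κ`.
-/

universe u

open Cardinal Set

section BlockDist

variable {X ι : Type*} [DecidableEq X] [DecidableEq ι] (b : X → ι)

noncomputable def blockDist (x y : X) : ℝ :=
  if x = y then 0 else if b x = b y then 1 else 2

variable {b}

@[simp]
theorem blockDist_self (x : X) : blockDist b x x = 0 := by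
  simp [blockDist]

theorem blockDist_of_ne_of_eq {x y : X} (hxy : x ≠ y) (h : b x = b y) : blockDist b x y = 1 := by
  simp [blockDist, hxy, h]

theorem blockDist_of_ne {x y : X} (h : b x ≠ b y) : blockDist b x y = 2 := by
  have hxy : x ≠ y := fun hxy => h (congrArg b hxy)
  simp [blockDist, hxy, h]

theorem one_le_blockDist {x y : X} (hxy : x ≠ y) : 1 ≤ blockDist b x y := by
  rw [blockDist, if_neg hxy]
  split_ifs <;> norm_num

theorem blockDist_nonneg (x y : X) : 0 ≤ blockDist b x y := by
  unfold blockDist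
  split_ifs <;> norm_num

theorem blockDist_eq_zero_iff (x y : X) : blockDist b x y = 0 ↔ x = y := by
  refine ⟨fun h => ?_, fun h => h ▸ blockDist_self x⟩
  by_contra hxy
  linarith [one_le_blockDist (b := b) hxy]

theorem blockDist_comm (x y : X) : blockDist b x y = blockDist b y x := by
  simp only [blockDist, eq_comm]

theorem blockDist_le_max (x y z : X) :
    blockDist b x z ≤ max (blockDist b x y) (blockDist b y z) := by
  by_cases hxz : x = z
  · rw [hxz, blockDist_self]
    exact le_max_of_le_left (blockDist_nonneg _ _)
  by_cases hb : b x = b z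
  · rw [blockDist_of_ne_of_eq hxz hb]
    by_cases hxy : x = y
    · subst hxy
      exact le_max_of_le_right (one_le_blockDist hxz)
    · exact le_max_of_le_left (one_le_blockDist hxy)
  · rw [blockDist_of_ne hb]
    by_cases hxy : b x = b y
    · exact le_max_of_le_right (blockDist_of_ne (hxy ▸ hb)).ge
    · exact le_max_of_le_left (blockDist_of_ne hxy).ge

theorem range_blockDist (hsame : ∃ x y, x ≠ y ∧ b x = b y) (hdiff : ∃ x y, b x ≠ b y) :
    (range fun p : X × X => blockDist b p.1 p.2) = {0, 1, 2} := by
  obtain ⟨x, y, hxy, hb⟩ := hsame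
  obtain ⟨x', y', hb'⟩ := hdiff
  refine Subset.antisymm ?_ ?_
  · rintro _ ⟨⟨u, v⟩, rfl⟩
    simp only [blockDist]
    split_ifs <;> simp
  · rintro r (rfl | rfl | rfl)
    · exact ⟨(x, x), blockDist_self x⟩
    · exact ⟨(x, y), blockDist_of_ne_of_eq hxy hb⟩
    · exact ⟨(x', y'), blockDist_of_ne hb'⟩

theorem subset_fiber_or_injOn_of_blockDist_eq {Y : Set X} {r : ℝ}
    (hY : ∀ x ∈ Y, ∀ y ∈ Y, x ≠ y → blockDist b x y = r) :
    (∃ i, Y ⊆ b ⁻¹' {i}) ∨ InjOn b Y := by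
  by_cases h : ∃ x ∈ Y, ∃ y ∈ Y, x ≠ y ∧ b x = b y
  · obtain ⟨x, hx, y, hy, hxy, hb⟩ := h
    have hr : r = 1 := (hY x hx y hy hxy).symm.trans (blockDist_of_ne_of_eq hxy hb)
    refine .inl ⟨b x, fun z hz => by_contra fun hzx => ?_⟩
    have hzx' : b z ≠ b x := hzx
    have := hY z hz x hx (ne_of_apply_ne b hzx')
    rw [blockDist_of_ne hzx', hr] at this
    norm_num at this
  · exact .inr fun x hx y hy hb => by_contra fun hxy => h ⟨x, hx, y, hy, hxy, hb⟩

end BlockDist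

theorem Cardinal.exists_fibers_lt_of_not_isRegular {κ : Cardinal.{u}} (hκ : ℵ₀ ≤ κ)
    (hsing : ¬κ.IsRegular) :
    ∃ (X ι : Type u) (b : X → ι), #X = κ ∧ #ι < κ ∧ ∀ i, #(b ⁻¹' {i}) < κ := by
  have := Cardinal.noMaxOrder hκ
  obtain ⟨S, hS, hScard⟩ := Order.exists_cof_eq κ.ord.ToType
  have hup : ∀ x : κ.ord.ToType, ∃ s ∈ S, x < s := fun x => by
    obtain ⟨y, hxy⟩ := exists_gt x
    obtain ⟨s, hs, hys⟩ := hS y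
    exact ⟨s, hs, hxy.trans_le hys⟩
  choose b hbS hlt using hup
  refine ⟨κ.ord.ToType, S, fun x => ⟨b x, hbS x⟩, mk_ord_toType κ, ?_, fun s => ?_⟩
  · rw [hScard, Ordinal.cof_toType]
    exact (Ordinal.cof_ord_le κ).lt_of_ne fun h => hsing ⟨hκ, h.ge⟩
  · have hsub : (fun x => (⟨b x, hbS x⟩ : S)) ⁻¹' {s} ⊆ Iio s.1 := by
      rintro x rfl
      exact hlt x
    exact (mk_le_mk_of_subset hsub).trans_lt (by simpa using mk_Iio_lt s.1)

/-- For every singular infinite cardinal `κ` there is an ultrametric space `(X,d)`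
with `|X| = κ` and scale `{0,1,2}` in which every equidistance subset has
cardinality `< κ`. -/
theorem stmt3 (κ : Cardinal.{u}) (hκ : Cardinal.aleph0 ≤ κ)
    (hsing : ¬ κ.IsRegular) :
    ∃ (X : Type u) (d : X → X → ℝ),
      (∀ x y : X, d x y = 0 ↔ x = y) ∧
      (∀ x y : X, d x y = d y x) ∧
      (∀ x y z : X, d x z ≤ max (d x y) (d y z)) ∧
      Cardinal.mk X = κ ∧
      (Set.range fun p : X × X => d p.1 p.2) = {0, 1, 2} ∧
      ∀ Y : Set X,
        (∃ r : ℝ, 0 < r ∧ ∀ x ∈ Y, ∀ y ∈ Y, x ≠ y → d x y = r) →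
        Cardinal.mk Y < κ := by
  classical
  obtain ⟨X, ι, b, hX, hι, hfib⟩ := exists_fibers_lt_of_not_isRegular hκ hsing
  have hsame : ∃ x y, x ≠ y ∧ b x = b y := by
    obtain ⟨x, y, hb, hxy⟩ :=
      Function.not_injective_iff.1 fun h => (mk_le_of_injective h).not_gt (hX ▸ hι)
    exact ⟨x, y, hxy, hb⟩
  have hdiff : ∃ x y, b x ≠ b y := by
    obtain ⟨x, -⟩ := hsame
    by_contra! h
    have : b ⁻¹' {b x} = Set.univ := eq_univ_of_forall fun y => h y x
    exact (hfib (b x)).ne (by rw [this, mk_univ, hX])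
  refine ⟨X, blockDist b, blockDist_eq_zero_iff, blockDist_comm, blockDist_le_max, hX,
    range_blockDist hsame hdiff, ?_⟩
  rintro Y ⟨r, -, hY⟩
  rcases subset_fiber_or_injOn_of_blockDist_eq hY with ⟨i, hi⟩ | hinj
  · exact (mk_le_mk_of_subset hi).trans_lt (hfib i)
  · rw [← mk_image_eq_of_injOn b Y hinj]
    exact (mk_set_le _).trans_lt hι
end

section
/- For every infinite cardinal κ there exists a metric space (X,d) with |X| = 2^κ and scale d(X,X) = {0,1,2} such that every equidistance subset Y of (X,d) has cardinality |Y| ≤ κ. -/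
/-!
Sierpiński's colouring: let `X = 2^κ` carry the lexicographic order `<` (with `κ` well-ordered)
and an arbitrary well-order `W`, and let `d x y` be `1` or `2` according as `<` and `W` order
`{x, y}` the same way or not. A symmetric function that vanishes exactly on the diagonal and
takes values in `{1, 2}` off it is a metric. A set with all distances `1` is well-ordered by `<`,
one with all distances `2` is well-ordered by `>`, and flipping every bit exchanges the two cases.

A `<`-well-ordered `A ⊆ 2^ι` has at most `ℵ₀ + |ι|` elements: a non-maximal `f ∈ A` is determined
by the index `i` at which it first differs from its successor in `A` together with its restriction
to `{j | j < i}`, and these restrictions form a well-ordered subset of `2^{j < i}`, so induction on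
the order type of `ι` applies. As `|X| = 2^κ > κ`, neither distance is constant on `X`, so the
scale is exactly `{0, 1, 2}`.
-/

universe u

open Cardinal Set

section LexBool

variable {ι : Type u}

def Lex.boolNot (f : Lex (ι → Bool)) : Lex (ι → Bool) :=
  toLex fun i => !f i

theorem Lex.boolNot_involutive : Function.Involutive (Lex.boolNot (ι := ι)) :=
  fun f => funext fun i => Bool.not_not (f i)

variable [LinearOrder ι]

theorem Lex.boolNot_strictAnti : StrictAnti (Lex.boolNot (ι := ι)) := by
  intro f g ⟨i, hagree, hi⟩
  obtain ⟨hf, hg⟩ := Bool.lt_iff.1 hi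
  exact ⟨i, fun j hj => congrArg (!·) (hagree j hj).symm, by simp [Lex.boolNot, hf, hg]⟩

def Lex.restrictIio (i : ι) (f : Lex (ι → Bool)) : Lex (Iio i → Bool) :=
  toLex fun j => f j

def succSplitAt (A : Set (Lex (ι → Bool))) (i : ι) : Set (Lex (ι → Bool)) :=
  {f ∈ A | ∃ g ∈ A, (∀ x ∈ A, f < x → g ≤ x) ∧ (∀ j < i, f j = g j) ∧ f i < g i}

variable {A : Set (Lex (ι → Bool))} {i : ι}

theorem not_lt_of_mem_succSplitAt {f f' : Lex (ι → Bool)} (hf : f ∈ succSplitAt A i)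
    (hf' : f' ∈ succSplitAt A i) (hagree : ∀ j < i, f j = f' j) : ¬ f < f' := by
  obtain ⟨-, g, -, hg_least, hfg, hfgi⟩ := hf
  obtain ⟨hf'A, _, _, _, _, hf'i⟩ := hf'
  have hfi : f' i = f i := by
    rw [(Bool.lt_iff.1 hf'i).1, (Bool.lt_iff.1 hfgi).1]
  -- otherwise `f'` would lie strictly between `f` and its successor `g`
  have hf'g : f' < g := ⟨i, fun j hj => (hagree j hj).symm.trans (hfg j hj), hfi ▸ hfgi⟩
  exact fun hff' => (hg_least f' hf'A hff').not_gt hf'g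

variable [WellFoundedLT ι]

theorem eq_of_mem_succSplitAt {f f' : Lex (ι → Bool)} (hf : f ∈ succSplitAt A i)
    (hf' : f' ∈ succSplitAt A i) (hagree : ∀ j < i, f j = f' j) : f = f' :=
  le_antisymm (not_lt.1 (not_lt_of_mem_succSplitAt hf' hf fun j hj => (hagree j hj).symm))
    (not_lt.1 (not_lt_of_mem_succSplitAt hf hf' hagree))

theorem strictMonoOn_restrictIio_succSplitAt :
    StrictMonoOn (Lex.restrictIio i) (succSplitAt A i) := by
  intro f hf f' hf' ⟨k, hagree, hk⟩
  have hki : k < i := by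
    by_contra! hik
    obtain rfl := eq_of_mem_succSplitAt hf hf' fun j hj => hagree j (hj.trans_le hik)
    exact lt_irrefl _ hk
  exact ⟨⟨k, hki⟩, fun j hj => hagree j hj, hk⟩

theorem isWF_image_restrictIio_succSplitAt (hA : A.IsWF) :
    (Lex.restrictIio i '' succSplitAt A i).IsWF := by
  rw [IsWF, wellFoundedOn_image]
  exact (hA.mono fun f hf => hf.1).mono' fun f hf f' hf' =>
    (strictMonoOn_restrictIio_succSplitAt.lt_iff_lt hf hf').1

theorem exists_mem_succSplitAt (hA : A.IsWF) {f : Lex (ι → Bool)} (hf : f ∈ A)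
    (hfx : ∃ x ∈ A, f < x) : ∃ i, f ∈ succSplitAt A i := by
  have hS : {x ∈ A | f < x}.IsWF := hA.mono fun x hx => hx.1
  obtain ⟨hgA, hfg⟩ := hS.min_mem hfx
  obtain ⟨i, hagree, hi⟩ := hfg
  exact ⟨i, hf, hS.min hfx, hgA, fun x hx hfx' => hS.min_le hfx ⟨hx, hfx'⟩, hagree, hi⟩

theorem mk_le_of_isWF_of_forall_Iio {μ : Cardinal.{u}} (hμ : ℵ₀ ≤ μ) (hι : #ι ≤ μ)
    (ih : ∀ i : ι, ∀ B : Set (Lex (Iio i → Bool)), B.IsWF → #B ≤ μ) (hA : A.IsWF) : #A ≤ μ := by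
  have hsplit : ∀ i, #(succSplitAt A i) ≤ μ := fun i =>
    (mk_image_eq_of_injOn _ _ strictMonoOn_restrictIio_succSplitAt.injOn).symm.le.trans
      (ih i _ (isWF_image_restrictIio_succSplitAt hA))
  have hmax : {f ∈ A | ∀ x ∈ A, ¬ f < x}.Subsingleton := fun f hf g hg =>
    le_antisymm (not_lt.1 (hg.2 f hf.1)) (not_lt.1 (hf.2 g hg.1))
  have hcover : A ⊆ (⋃ i, succSplitAt A i) ∪ {f ∈ A | ∀ x ∈ A, ¬ f < x} := fun f hf => by
    by_cases hfx : ∃ x ∈ A, f < x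
    · exact Or.inl (mem_iUnion.2 (exists_mem_succSplitAt hA hf hfx))
    · exact Or.inr ⟨hf, by simpa using hfx⟩
  calc #A ≤ #(⋃ i, succSplitAt A i) + #{f ∈ A | ∀ x ∈ A, ¬ f < x} :=
        (mk_le_mk_of_subset hcover).trans (mk_union_le _ _)
    _ ≤ μ * μ + 1 :=
        add_le_add ((mk_iUnion_le _).trans (mul_le_mul' hι (ciSup_le' hsplit)))
          (mk_le_one_iff_set_subsingleton.2 hmax)
    _ = μ := by rw [mul_eq_self hμ, add_one_eq hμ]

variable (ι) in
theorem mk_le_of_isWF_lex {A : Set (Lex (ι → Bool))} (hA : A.IsWF) : #A ≤ ℵ₀ ⊔ #ι := by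
  suffices h : ∀ o : Ordinal.{u}, ∀ (ι : Type u) [LinearOrder ι] [WellFoundedLT ι],
      Ordinal.type ((· < ·) : ι → ι → Prop) = o →
      ∀ A : Set (Lex (ι → Bool)), A.IsWF → #A ≤ ℵ₀ ⊔ #ι from h _ ι rfl A hA
  intro o
  induction o using WellFoundedLT.induction with
  | _ o ih =>
  rintro ι _ _ rfl A hA
  refine mk_le_of_isWF_of_forall_Iio le_sup_left le_sup_right (fun i B hB => ?_) hA
  exact (ih _ (Ordinal.typein_lt_type _ i) (Iio i) rfl B hB).trans
    (sup_le_sup_left (mk_subtype_le _) _)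

theorem mk_le_of_wellFoundedOn_gt_lex {A : Set (Lex (ι → Bool))}
    (hA : A.WellFoundedOn (· > ·)) : #A ≤ ℵ₀ ⊔ #ι := by
  rw [← mk_image_eq Lex.boolNot_involutive.injective]
  refine mk_le_of_isWF_lex ι ?_
  rw [IsWF, wellFoundedOn_image]
  exact hA.mono' fun f _ g _ => Lex.boolNot_strictAnti.lt_iff_gt.1

end LexBool

section Sierpinski

variable {α : Type*} [LinearOrder α] (r : α → α → Prop)

open Classical in
noncomputable def sierpinskiDist (x y : α) : ℝ :=
  if x = y then 0 else if (x < y ↔ r x y) then 1 else 2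

variable {r} {x y : α}

theorem sierpinskiDist_self (x : α) : sierpinskiDist r x x = 0 := by
  simp [sierpinskiDist]

theorem sierpinskiDist_eq_one_iff (h : x ≠ y) : sierpinskiDist r x y = 1 ↔ (x < y ↔ r x y) := by
  by_cases hxy : x < y ↔ r x y <;> simp [sierpinskiDist, h, hxy]

theorem sierpinskiDist_eq_one_or_two (h : x ≠ y) :
    sierpinskiDist r x y = 1 ∨ sierpinskiDist r x y = 2 := by
  by_cases hxy : x < y ↔ r x y <;> simp [sierpinskiDist, h, hxy]

theorem sierpinskiDist_eq_zero_iff : sierpinskiDist r x y = 0 ↔ x = y := by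
  refine ⟨fun h0 => ?_, fun h => h ▸ sierpinskiDist_self x⟩
  by_contra h
  rcases sierpinskiDist_eq_one_or_two (r := r) h with h1 | h2 <;> linarith

theorem one_le_sierpinskiDist (h : x ≠ y) : 1 ≤ sierpinskiDist r x y := by
  rcases sierpinskiDist_eq_one_or_two (r := r) h with h1 | h2 <;> linarith

theorem sierpinskiDist_le_two (x y : α) : sierpinskiDist r x y ≤ 2 := by
  by_cases h : x = y
  · rw [h, sierpinskiDist_self]; norm_num
  · rcases sierpinskiDist_eq_one_or_two (r := r) h with h1 | h2 <;> linarith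

theorem sierpinskiDist_comm [IsStrictTotalOrder α r] (x y : α) :
    sierpinskiDist r x y = sierpinskiDist r y x := by
  by_cases h : x = y
  · rw [h]
  have hlt : x < y ↔ ¬ y < x := ⟨lt_asymm, (lt_or_gt_of_ne h).resolve_right⟩
  have hr : r x y ↔ ¬ r y x :=
    ⟨asymm, fun hyx => (trichotomous_of r x y).resolve_right (not_or_intro h hyx)⟩
  have hiff : (x < y ↔ r x y) ↔ (y < x ↔ r y x) := by rw [hlt, hr, not_iff_not]
  simp only [sierpinskiDist, if_neg h, if_neg (Ne.symm h)]
  classical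
  exact if_congr hiff rfl rfl

theorem sierpinskiDist_triangle (x y z : α) :
    sierpinskiDist r x z ≤ sierpinskiDist r x y + sierpinskiDist r y z := by
  rcases eq_or_ne x y with rfl | hxy
  · rw [sierpinskiDist_self, zero_add]
  rcases eq_or_ne y z with rfl | hyz
  · rw [sierpinskiDist_self, add_zero]
  linarith [sierpinskiDist_le_two (r := r) x z, one_le_sierpinskiDist (r := r) hxy,
    one_le_sierpinskiDist (r := r) hyz]

theorem range_sierpinskiDist
    (h : ∀ c : ℝ, ¬ (univ : Set α).Pairwise fun x y => sierpinskiDist r x y = c) :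
    (range fun p : α × α => sierpinskiDist r p.1 p.2) = {0, 1, 2} := by
  have hne : ∀ c, ∃ x y, x ≠ y ∧ sierpinskiDist r x y ≠ c := fun c => by
    simpa [Set.Pairwise] using h c
  obtain ⟨x₁, y₁, hxy₁, h₁⟩ := hne 2
  obtain ⟨x₂, y₂, hxy₂, h₂⟩ := hne 1
  refine subset_antisymm ?_ ?_
  · rintro _ ⟨⟨x, y⟩, rfl⟩
    rcases eq_or_ne x y with rfl | hxy
    · simp [sierpinskiDist_self]
    · rcases sierpinskiDist_eq_one_or_two (r := r) hxy with h | h <;> simp [h]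
  · rintro c (rfl | rfl | rfl)
    · exact ⟨(x₁, x₁), sierpinskiDist_self x₁⟩
    · exact ⟨(x₁, y₁), (sierpinskiDist_eq_one_or_two hxy₁).resolve_right h₁⟩
    · exact ⟨(x₂, y₂), (sierpinskiDist_eq_one_or_two hxy₂).resolve_left h₂⟩

theorem isWF_of_pairwise_sierpinskiDist_eq_one (hr : WellFounded r) {Y : Set α}
    (hY : Y.Pairwise fun x y => sierpinskiDist r x y = 1) : Y.IsWF :=
  hr.wellFoundedOn.mono' fun _ hx _ hy hxy =>
    ((sierpinskiDist_eq_one_iff hxy.ne).1 (hY hx hy hxy.ne)).1 hxy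

theorem wellFoundedOn_gt_of_pairwise_sierpinskiDist_ne_one [IsWellOrder α r] {Y : Set α}
    (hY : Y.Pairwise fun x y => sierpinskiDist r x y ≠ 1) : Y.WellFoundedOn (· > ·) :=
  (IsWellFounded.wf (r := r)).wellFoundedOn.mono' fun x hx y hy hyx => by
    have hdis : ¬ (y < x ↔ r y x) := mt (sierpinskiDist_eq_one_iff hyx.ne).2 (hY hy hx hyx.ne)
    exact (trichotomous_of r x y).resolve_right
      (not_or_intro hyx.ne' fun hryx => hdis (iff_of_true hyx hryx))

end Sierpinski

theorem mk_le_of_pairwise_sierpinskiDist_eq {ι : Type u} [LinearOrder ι] [WellFoundedLT ι]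
    (r : Lex (ι → Bool) → Lex (ι → Bool) → Prop) [IsWellOrder _ r] {Y : Set (Lex (ι → Bool))}
    {c : ℝ} (hY : Y.Pairwise fun x y => sierpinskiDist r x y = c) : #Y ≤ ℵ₀ ⊔ #ι := by
  rcases eq_or_ne c 1 with rfl | hc
  · exact mk_le_of_isWF_lex ι (isWF_of_pairwise_sierpinskiDist_eq_one IsWellFounded.wf hY)
  · exact mk_le_of_wellFoundedOn_gt_lex
      (wellFoundedOn_gt_of_pairwise_sierpinskiDist_ne_one (hY.mono' fun _ _ h => h ▸ hc))

/-- For every infinite cardinal `κ` there is a metric space `(X,d)` with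
`|X| = 2^κ` and scale `{0,1,2}` in which every equidistance subset has
cardinality `≤ κ`. -/
theorem stmt4 (κ : Cardinal.{u}) (hκ : Cardinal.aleph0 ≤ κ) :
    ∃ (X : Type u) (d : X → X → ℝ),
      (∀ x y : X, d x y = 0 ↔ x = y) ∧
      (∀ x y : X, d x y = d y x) ∧
      (∀ x y z : X, d x z ≤ d x y + d y z) ∧
      Cardinal.mk X = 2 ^ κ ∧
      (Set.range fun p : X × X => d p.1 p.2) = {0, 1, 2} ∧
      ∀ Y : Set X,
        (∃ r : ℝ, 0 < r ∧ ∀ x ∈ Y, ∀ y ∈ Y, x ≠ y → d x y = r) →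
        Cardinal.mk Y ≤ κ := by
  let ι := κ.ord.ToType
  let X := Lex (ι → Bool)
  let d := sierpinskiDist (α := X) WellOrderingRel
  have hX : #X = 2 ^ κ := by
    change #(ι → Bool) = _
    simp [ι]
  have hsmall : ∀ (Y : Set X) (c : ℝ), (Y.Pairwise fun x y => d x y = c) → #Y ≤ κ :=
    fun Y c hY => by simpa [ι, hκ] using mk_le_of_pairwise_sierpinskiDist_eq _ hY
  refine ⟨X, d, fun x y => sierpinskiDist_eq_zero_iff, sierpinskiDist_comm,
    sierpinskiDist_triangle, hX, range_sierpinskiDist fun c hc => ?_,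
    fun Y ⟨c, _, hY⟩ => hsmall Y c hY⟩
  exact (cantor κ).not_ge (by simpa [hX] using hsmall univ c hc)
end

section
/- Let (X,d) be a metric space whose scale d(X,X) is infinite of cardinality κ. If |X| ≥ (2^κ)^+ (the cardinal successor of 2^κ), then there exists an equidistance subset Y of (X,d) with |Y| = κ^+. -/
/-!
Fix a set `A ⊆ X` of size at most `2^κ` that realizes, over each of its subsets `B` of size at
most `κ`, every distance type `b ↦ d(b, z)` realized in `X`; it exists because there are at most
`κ^κ = 2^κ` such types over each `B`. Since `|X| > 2^κ` there is a point `z ∉ A`. Along `κ⁺`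
choose `a_α ∈ A` realizing over `{a_β | β < α}` the type of `z`, so `d(a_β, a_α) = d(a_β, z)`
for `β < α`. As `κ⁺` is regular and the scale has size `κ`, some `κ⁺` of the `a_α` have the
same distance `r > 0` to `z`, hence are pairwise at distance `r`.
-/

universe u

open Cardinal

inductive InfinitaryTerm (I J : Type u) : Type u
  | const : InfinitaryTerm I J
  | app (j : J) (t : I → InfinitaryTerm I J) : InfinitaryTerm I J

namespace InfinitaryTerm

variable {I J : Type u}

def symbolAt : InfinitaryTerm I J → List I → Option J
  | const, _ => none
  | app j _, [] => some j
  | app _ t, i :: l => symbolAt (t i) l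

theorem symbolAt_injective : Function.Injective (symbolAt (I := I) (J := J)) := by
  intro t
  induction t with
  | const =>
    rintro (_ | ⟨j, s⟩) h
    · rfl
    · simpa [symbolAt] using congrFun h []
  | app j t ih =>
    rintro (_ | ⟨j', t'⟩) h
    · simpa [symbolAt] using congrFun h []
    · have hj : j = j' := by simpa [symbolAt] using congrFun h []
      have ht : t = t' := funext fun i => ih i (funext fun l => congrFun h (i :: l))
      rw [hj, ht]

theorem mk_le : #(InfinitaryTerm I J) ≤ #(Option J) ^ #(List I) :=
  (mk_le_of_injective symbolAt_injective).trans_eq (power_def _ _).symm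

def eval {X : Type u} (c : X) (op : J → (I → X) → X) : InfinitaryTerm I J → X
  | const => c
  | app j t => op j fun i => eval c op (t i)

theorem exists_closed_subset {X : Type u} (c : X) (op : J → (I → X) → X) :
    ∃ A : Set X, c ∈ A ∧ (∀ j f, (∀ i, f i ∈ A) → op j f ∈ A) ∧
      #A ≤ #(Option J) ^ #(List I) := by
  refine ⟨Set.range (eval c op), ⟨const, rfl⟩, fun j f hf => ?_, mk_range_le.trans mk_le⟩
  choose t ht using hf
  exact ⟨app j t, by simp only [eval, ht]⟩

end InfinitaryTerm

section Metric

variable {X : Type u} [MetricSpace X]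

variable (X) in
def distScale : Set ℝ := Set.range fun p : X × X => dist p.1 p.2

def IsTypeClosed (A : Set X) (c : Cardinal.{u}) : Prop :=
  ∀ B ⊆ A, #B ≤ c → ∀ z : X, ∃ y ∈ A, ∀ b ∈ B, dist b y = dist b z

theorem exists_isTypeClosed [Nonempty X] (I : Type u) :
    ∃ A : Set X, IsTypeClosed A #I ∧ #A ≤ #(Option (I → distScale X)) ^ #(List I) := by
  classical
  let c : X := Classical.arbitrary X
  let op (t : I → distScale X) (f : I → X) : X :=
    if h : ∃ y, ∀ i, dist (f i) y = t i then h.choose else c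
  obtain ⟨A, hcA, hopA, hA⟩ := InfinitaryTerm.exists_closed_subset c op
  refine ⟨A, fun B hBA hB z => ?_, hA⟩
  obtain ⟨e⟩ := hB
  let f : I → X := Function.extend e Subtype.val fun _ => c
  have hfA : ∀ i, f i ∈ A := fun i => by
    by_cases hi : ∃ b, e b = i
    · obtain ⟨b, rfl⟩ := hi
      simpa [f, e.injective.extend_apply] using hBA b.2
    · simpa [f, Function.extend_apply' _ _ _ hi] using hcA
  let t (i : I) : distScale X := ⟨dist (f i) z, (f i, z), rfl⟩
  have ht : ∃ y, ∀ i, dist (f i) y = t i := ⟨z, fun _ => rfl⟩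
  refine ⟨op t f, hopA t f hfA, fun b hb => ?_⟩
  have hfb : f (e ⟨b, hb⟩) = b := e.injective.extend_apply _ _ _
  have := ht.choose_spec (e ⟨b, hb⟩)
  simp only [op, dif_pos ht, hfb, t] at this ⊢
  exact this

theorem exists_isTypeClosed_card_le [Nonempty X] {κ : Cardinal.{u}} (hκ : ℵ₀ ≤ κ)
    (hS : lift.{u} #(distScale X) ≤ κ) : ∃ A : Set X, IsTypeClosed A κ ∧ #A ≤ 2 ^ κ := by
  have : Infinite κ.out := infinite_iff.2 (by rwa [mk_out])
  obtain ⟨A, hA, hAcard⟩ := exists_isTypeClosed (X := X) κ.out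
  rw [mk_out] at hA
  refine ⟨A, hA, hAcard.trans ?_⟩
  have htypes : #(κ.out → distScale X) ≤ 2 ^ κ := by
    rw [mk_arrow, lift_uzero, mk_out, ← power_self_eq hκ]
    exact power_le_power_right hS
  have h2κ : ℵ₀ ≤ (2 : Cardinal) ^ κ := hκ.trans (cantor κ).le
  calc #(Option (κ.out → distScale X)) ^ #(List κ.out)
      ≤ (2 ^ κ + 1) ^ κ := by
        rw [mk_option, mk_list_eq_mk, mk_out]
        exact power_le_power_right (add_le_add_left htypes 1)
    _ = 2 ^ κ := by rw [add_one_eq h2κ, ← power_mul, mul_eq_self hκ]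

variable {O : Type u} [LinearOrder O]

theorem IsTypeClosed.exists_seq {A : Set X} {c : Cardinal.{u}} (hA : IsTypeClosed A c)
    [WellFoundedLT O] (hO : ∀ α : O, #(Set.Iio α) ≤ c) (z : X) :
    ∃ a : O → X, (∀ α, a α ∈ A) ∧ ∀ α β, β < α → dist (a β) (a α) = dist (a β) z := by
  choose y hyA hy using fun α (p : Set.Iio α → A) =>
    hA (Set.range fun β => (p β : X)) (Set.range_subset_iff.2 fun β => (p β).2)
      (mk_range_le.trans (hO α)) z
  let a : O → A := wellFounded_lt.fix fun α p => ⟨y α fun β => p β β.2, hyA α _⟩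
  refine ⟨fun α => a α, fun α => (a α).2, fun α β hβ => ?_⟩
  have ha : a α = ⟨y α fun β => a β, hyA α _⟩ := wellFounded_lt.fix_eq _ α
  simp only [ha]
  exact hy α _ _ ⟨⟨β, hβ⟩, rfl⟩

variable {a : O → X} {z : X}

theorem injective_of_dist_eq (ha : ∀ α β, β < α → dist (a β) (a α) = dist (a β) z)
    (haz : ∀ α, a α ≠ z) : Function.Injective a := by
  intro α γ h
  by_contra hne
  rcases lt_or_gt_of_ne hne with hlt | hlt
  · have hd := ha γ α hlt
    rw [h, dist_self] at hd
    exact haz γ (dist_eq_zero.1 hd.symm)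
  · have hd := ha α γ hlt
    rw [← h, dist_self] at hd
    exact haz α (dist_eq_zero.1 hd.symm)

theorem equidistanceSubset_image_of_dist_eq
    (ha : ∀ α β, β < α → dist (a β) (a α) = dist (a β) z) {Q : Set O} {r : ℝ} (hr : 0 < r)
    (hQ : ∀ β ∈ Q, dist (a β) z = r) : EquidistanceSubset (a '' Q) := by
  refine ⟨r, hr, ?_⟩
  rintro _ ⟨α, hα, rfl⟩ _ ⟨γ, hγ, rfl⟩ hne
  rcases lt_or_gt_of_ne (ne_of_apply_ne a hne) with h | h
  · rw [ha γ α h, hQ α hα]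
  · rw [dist_comm, ha α γ h, hQ γ hγ]

theorem exists_equidistanceSubset_of_dist_eq {κ : Cardinal.{u}} (hκ : ℵ₀ ≤ κ)
    (hS : lift.{u} #(distScale X) ≤ κ) (hO : #O = Order.succ κ)
    (ha : ∀ α β, β < α → dist (a β) (a α) = dist (a β) z) (haz : ∀ α, a α ≠ z) :
    ∃ Y : Set X, EquidistanceSubset Y ∧ #Y = Order.succ κ := by
  let d (α : O) : ULift.{u} (distScale X) := ⟨dist (a α) z, (a α, z), rfl⟩
  obtain ⟨s, hs⟩ := infinite_pigeonhole d (hO ▸ hκ.trans (Order.le_succ κ)) (by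
    rw [hO, (isRegular_succ hκ).cof_ord, mk_uLift]
    exact hS.trans_lt (Order.lt_succ κ))
  obtain ⟨β₀, hβ₀⟩ : (d ⁻¹' {s}).Nonempty := by
    rw [← Set.nonempty_coe_sort, ← mk_ne_zero_iff, hs, hO]
    exact (Cardinal.succ_pos κ).ne'
  have hQ : ∀ β ∈ d ⁻¹' {s}, dist (a β) z = dist (a β₀) z := fun β hβ =>
    congrArg (fun t : ULift.{u} (distScale X) => (t.down : ℝ)) (hβ.trans hβ₀.symm)
  refine ⟨a '' (d ⁻¹' {s}),
    equidistanceSubset_image_of_dist_eq ha (dist_pos.2 (haz β₀)) hQ, ?_⟩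
  rw [mk_image_eq (injective_of_dist_eq ha haz), hs, hO]

end Metric

/-- If the scale of a metric space is infinite of cardinality `κ` and
`|X| ≥ (2^κ)⁺`, then there is an equidistance subset of cardinality `κ⁺`. -/
theorem stmt5 {X : Type u} [MetricSpace X] (κ : Cardinal.{u})
    (hinf : (Set.range fun p : X × X => dist p.1 p.2).Infinite)
    (hκ : Cardinal.lift.{u}
      (Cardinal.mk ↥(Set.range fun p : X × X => dist p.1 p.2)) = κ)
    (hX : Order.succ (2 ^ κ) ≤ Cardinal.mk X) :
    ∃ Y : Set X, EquidistanceSubset Y ∧ Cardinal.mk Y = Order.succ κ := by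
  have hκ₀ : ℵ₀ ≤ κ := hκ ▸ aleph0_le_lift.2 (infinite_iff.1 hinf.to_subtype)
  have : Nonempty X := mk_ne_zero_iff.1 (ne_bot_of_le_ne_bot (Cardinal.succ_pos _).ne' hX)
  obtain ⟨A, hA, hAcard⟩ := exists_isTypeClosed_card_le (X := X) hκ₀ hκ.le
  obtain ⟨z, hz⟩ : ∃ z, z ∉ A := by
    by_contra! hAX
    rw [Set.eq_univ_of_forall hAX, mk_univ] at hAcard
    exact (Order.lt_succ _).not_ge (hX.trans hAcard)
  obtain ⟨a, haA, ha⟩ := hA.exists_seq (O := (Order.succ κ).ord.ToType)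
    (fun α => Order.lt_succ_iff.1 (by simpa using mk_Iio_lt α (by simp))) z
  exact exists_equidistanceSubset_of_dist_eq hκ₀ hκ.le (by simp) ha
    fun α h => hz (h ▸ haA α)
end

section
/- For every infinite metric space (X,d) there exists an injective sequence (x_n)_{n∈ω} in X such that one of the following holds: (i) the sequence (d(x_0, x_n))_{n≥1} is strictly increasing; (ii) the sequence (d(x_0, x_n))_{n≥1} is strictly decreasing; (iii) for every n ∈ ω and all i, j with i > n and j > n, one has d(x_n, x_i) = d(x_n, x_j). -/
/-!
If some point `x₀` sees infinitely many distances, these distances contain a strictly monotone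
sequence of positive reals, and points realising them, preceded by `x₀`, give (i) or (ii).
Otherwise every `dist a` takes finitely many values, and a Ramsey-type refinement applies:
from an infinite set pick a point `a`, pass by pigeonhole to an infinite subset of the rest on
which `dist a` is constant, and repeat; the chosen points give (iii).
-/

open Set Function

section Refinement

variable {α β : Type*}

theorem Set.Infinite.exists_infinite_fiber {s : Set α} (hs : s.Infinite) {f : α → β}
    (hf : (f '' s).Finite) : ∃ b, (s ∩ f ⁻¹' {b}).Infinite := by
  by_contra! h
  exact hs (Finite.of_finite_fibers f hf fun b _ => h b)

theorem exists_injective_seq_forall_eq_of_finite_range [Infinite α] (f : α → α → β)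
    (hf : ∀ a, (range (f a)).Finite) :
    ∃ x : ℕ → α, Injective x ∧
      ∀ n i j, n < i → n < j → f (x n) (x i) = f (x n) (x j) := by
  have step (s : {s : Set α // s.Infinite}) : ∃ t : {s : Set α // s.Infinite},
      t.1 ⊆ s.1 \ {s.2.nonempty.some} ∧ ∃ b, ∀ y ∈ t.1, f s.2.nonempty.some y = b := by
    obtain ⟨b, hb⟩ := (s.2.sdiff (finite_singleton s.2.nonempty.some)).exists_infinite_fiber
      ((hf _).subset (image_subset_range _ _))
    exact ⟨⟨_, hb⟩, inter_subset_left, b, fun y hy => hy.2⟩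
  choose next hnext b hb using step
  let S : ℕ → {s : Set α // s.Infinite} := fun n => next^[n] ⟨univ, infinite_univ⟩
  have hS_succ (n : ℕ) : S (n + 1) = next (S n) := iterate_succ_apply' _ _ _
  let x : ℕ → α := fun n => (S n).2.nonempty.some
  have hS_anti : Antitone fun n => (S n).1 := antitone_nat_of_succ_le fun n => by
    rw [hS_succ]
    exact (hnext _).trans sdiff_subset
  have hx_mem {n i : ℕ} (h : n < i) : x i ∈ (next (S n)).1 := by
    rw [← hS_succ]
    exact hS_anti h (S i).2.nonempty.some_mem
  refine ⟨x, .of_lt_imp_ne fun n i h => ?_, fun n i j hi hj => ?_⟩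
  · exact fun hx => (hnext _ (hx_mem h)).2 hx.symm
  · rw [hb _ _ (hx_mem hi), hb _ _ (hx_mem hj)]

end Refinement

theorem Metric.exists_injective_seq_dist_strictMono_or_strictAnti {X : Type*}
    [PseudoMetricSpace X] {x₀ : X} (h : (range (dist x₀)).Infinite) :
    ∃ x : ℕ → X, Injective x ∧
      (StrictMono (fun n => dist (x 0) (x (n + 1))) ∨
        StrictAnti (fun n => dist (x 0) (x (n + 1)))) := by
  have : Infinite ↥(range (dist x₀) \ {0}) := (h.sdiff (finite_singleton 0)).to_subtype
  obtain ⟨r, hr⟩ := Infinite.exists_strictMono_or_strictAnti ↥(range (dist x₀) \ {0})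
  choose z hz using fun n => (r n).2.1
  let x : ℕ → X := fun
    | 0 => x₀
    | n + 1 => z n
  have hdist : (fun n => dist (x 0) (x (n + 1))) = Subtype.val ∘ r := funext hz
  have hr_inj : Injective r := hr.elim StrictMono.injective StrictAnti.injective
  have hz_inj : Injective z := fun m n hmn =>
    hr_inj (Subtype.val_injective (by rw [← hz, ← hz, hmn]))
  have hz_ne (n : ℕ) : z n ≠ x₀ := fun hn =>
    (r n).2.2 (mem_singleton_iff.2 (by rw [← hz, hn, dist_self]))
  refine ⟨x, ?_, ?_⟩
  · rintro (_ | m) (_ | n) hmn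
    · rfl
    · exact (hz_ne n hmn.symm).elim
    · exact (hz_ne m hmn).elim
    · exact congrArg _ (hz_inj hmn)
  · rw [hdist]
    exact hr.imp (Subtype.strictMono_coe _).comp (Subtype.strictMono_coe _).comp_strictAnti

/-- In every infinite metric space there is an injective sequence `(x n)` such
that either `(dist (x 0) (x n))_{n ≥ 1}` is strictly increasing, or it is
strictly decreasing, or for every `n` the distance `dist (x n) (x i)` does not
depend on `i > n`. -/
theorem stmt6 {X : Type*} [MetricSpace X] [Infinite X] :
    ∃ x : ℕ → X, Function.Injective x ∧
      (StrictMono (fun n : ℕ => dist (x 0) (x (n + 1))) ∨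
       StrictAnti (fun n : ℕ => dist (x 0) (x (n + 1))) ∨
       ∀ n i j : ℕ, n < i → n < j → dist (x n) (x i) = dist (x n) (x j)) := by
  by_cases h : ∃ x₀ : X, (range (dist x₀)).Infinite
  · obtain ⟨x₀, hx₀⟩ := h
    obtain ⟨x, hx, hmono_or_anti⟩ :=
      Metric.exists_injective_seq_dist_strictMono_or_strictAnti hx₀
    exact ⟨x, hx, hmono_or_anti.imp_right .inl⟩
  · push Not at h
    obtain ⟨x, hx, hconst⟩ := exists_injective_seq_forall_eq_of_finite_range dist h
    exact ⟨x, hx, .inr (.inr hconst)⟩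
end

section
/- Let (X,d) be an infinite metric space and let {X_n : n ∈ ω} be a family of nonempty pairwise disjoint subsets of X such that d(X_i, X_j) ∩ d(X_n, X_n) = ∅ for all n and all distinct i, j (where d(A,B) = {d(a,b) : a ∈ A, b ∈ B}). Let 𝒰 be a metrically Ramsey ultrafilter on X such that ⋃_{n<ω} X_n ∈ 𝒰 and X_n ∉ 𝒰 for each n < ω. Then there exists U ∈ 𝒰 such that |U ∩ X_n| ≤ 1 for each n < ω. -/
/-! Colour a pair by whether its distance is realised inside a single piece; this colouring is
isometric, so `𝒰` contains a monochrome set `U`. If the colour is "inside", the separation of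
cross distances from inner distances forces `U ∩ ⋃ n, Xs n ∈ 𝒰` into a single piece, which is
not in `𝒰`. So the colour is "across", and then no two points of `U` lie in a common piece. -/

/-- A `{0,1}`-coloring of pairs is isometric if it only depends on the distance. -/
def IsIsometricColoring {X : Type*} [MetricSpace X] (χ : X → X → Bool) : Prop :=
  ∀ x y z t : X, dist x y = dist z t → χ x y = χ z t

/-- `[U]²` is monochrome for the coloring `χ`. -/
def MonochromeOn {X : Type*} (χ : X → X → Bool) (U : Set X) : Prop :=
  ∃ k : Bool, ∀ x ∈ U, ∀ y ∈ U, x ≠ y → χ x y = k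

/-- An ultrafilter is free if it is not principal. -/
def IsFreeUltrafilter {X : Type*} (𝒰 : Ultrafilter X) : Prop :=
  ∀ x : X, 𝒰 ≠ pure x

/-- An ultrafilter is metrically Ramsey if every isometric coloring has a
monochrome member. -/
def MetricallyRamsey {X : Type*} [MetricSpace X] (𝒰 : Ultrafilter X) : Prop :=
  ∀ χ : X → X → Bool, IsIsometricColoring χ → ∃ U ∈ 𝒰, MonochromeOn χ U

/-- The set of distances between two subsets. -/
def distSet {X : Type*} [MetricSpace X] (A B : Set X) : Set ℝ :=
  {r : ℝ | ∃ a ∈ A, ∃ b ∈ B, dist a b = r}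

section

variable {X : Type*} [MetricSpace X]

theorem isIsometricColoring_comp_dist (p : ℝ → Bool) :
    IsIsometricColoring (fun x y : X => p (dist x y)) :=
  fun _ _ _ _ h => congrArg p h

def innerDists {ι : Type*} (Xs : ι → Set X) : Set ℝ :=
  ⋃ n, distSet (Xs n) (Xs n)

variable {ι : Type*} {Xs : ι → Set X}

theorem dist_mem_innerDists {n : ι} {x y : X} (hx : x ∈ Xs n) (hy : y ∈ Xs n) :
    dist x y ∈ innerDists Xs :=
  Set.mem_iUnion.2 ⟨n, x, hx, y, hy, rfl⟩

theorem eq_of_dist_mem_innerDists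
    (hdist : ∀ n i j, i ≠ j → distSet (Xs i) (Xs j) ∩ distSet (Xs n) (Xs n) = ∅)
    {i j : ι} {x y : X} (hx : x ∈ Xs i) (hy : y ∈ Xs j) (h : dist x y ∈ innerDists Xs) :
    i = j := by
  by_contra hij
  obtain ⟨n, hn⟩ := Set.mem_iUnion.1 h
  exact (hdist n i j hij).subset ⟨⟨x, hx, y, hy, rfl⟩, hn⟩

theorem exists_subset_of_forall_dist_mem_innerDists
    (hdist : ∀ n i j, i ≠ j → distSet (Xs i) (Xs j) ∩ distSet (Xs n) (Xs n) = ∅)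
    {V : Set X} (hV : V.Nonempty) (hVsub : V ⊆ ⋃ n, Xs n)
    (hinner : ∀ x ∈ V, ∀ y ∈ V, x ≠ y → dist x y ∈ innerDists Xs) :
    ∃ n, V ⊆ Xs n := by
  obtain ⟨x, hxV⟩ := hV
  obtain ⟨n, hxn⟩ := Set.mem_iUnion.1 (hVsub hxV)
  refine ⟨n, fun y hyV => ?_⟩
  obtain ⟨m, hym⟩ := Set.mem_iUnion.1 (hVsub hyV)
  rcases eq_or_ne x y with rfl | hxy
  · exact hxn
  · rwa [eq_of_dist_mem_innerDists hdist hxn hym (hinner x hxV y hyV hxy)]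

theorem subsingleton_inter_of_forall_dist_notMem_innerDists {V : Set X}
    (hcross : ∀ x ∈ V, ∀ y ∈ V, x ≠ y → dist x y ∉ innerDists Xs) (n : ι) :
    (V ∩ Xs n).Subsingleton := fun x hx y hy => by
  by_contra hxy
  exact hcross x hx.1 y hy.1 hxy (dist_mem_innerDists hx.2 hy.2)

end

theorem stmt7_general {X : Type*} [MetricSpace X] (Xs : ℕ → Set X)
    (hdist : ∀ n i j, i ≠ j → distSet (Xs i) (Xs j) ∩ distSet (Xs n) (Xs n) = ∅)
    (𝒰 : Ultrafilter X)
    (hMR : MetricallyRamsey 𝒰)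
    (hunion : (⋃ n, Xs n) ∈ 𝒰) (hnot : ∀ n, Xs n ∉ 𝒰) :
    ∃ U ∈ 𝒰, ∀ n, (U ∩ Xs n).Subsingleton := by
  classical
  obtain ⟨U, hU, k, hk⟩ :=
    hMR _ (isIsometricColoring_comp_dist (fun r => decide (r ∈ innerDists Xs)))
  have hV : U ∩ ⋃ n, Xs n ∈ 𝒰 := Filter.inter_mem hU hunion
  cases k
  · refine ⟨U, hU, subsingleton_inter_of_forall_dist_notMem_innerDists fun x hx y hy hxy => ?_⟩
    simpa using hk x hx y hy hxy
  · obtain ⟨n, hn⟩ := exists_subset_of_forall_dist_mem_innerDists hdist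
      (Filter.nonempty_of_mem hV) Set.inter_subset_right
      fun x hx y hy hxy => by simpa using hk x hx.1 y hy.1 hxy
    exact absurd (Filter.mem_of_superset hV hn) (hnot n)

/-- Proposition 1.6(i): given a family of nonempty pairwise disjoint subsets
whose cross distances avoid the inner distances, a metrically Ramsey
ultrafilter containing the union but no single piece has a member meeting
each piece in at most one point. -/
theorem stmt7 {X : Type*} [MetricSpace X] [Infinite X] (Xs : ℕ → Set X)
    (hne : ∀ n, (Xs n).Nonempty)
    (hdisj : ∀ i j, i ≠ j → Disjoint (Xs i) (Xs j))
    (hdist : ∀ n i j, i ≠ j → distSet (Xs i) (Xs j) ∩ distSet (Xs n) (Xs n) = ∅)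
    (𝒰 : Ultrafilter X) (hfree : IsFreeUltrafilter 𝒰)
    (hMR : MetricallyRamsey 𝒰)
    (hunion : (⋃ n, Xs n) ∈ 𝒰) (hnot : ∀ n, Xs n ∉ 𝒰) :
    ∃ U ∈ 𝒰, ∀ n, (U ∩ Xs n).Subsingleton :=
  stmt7_general Xs hdist 𝒰 hMR hunion hnot
end

section
/- Let (X,d) be an infinite metric space and let {X_n : n ∈ ω} be a family of nonempty pairwise disjoint subsets of X such that d(X_i, X_j) ∩ d(X_n, X_n) = ∅ for all n and all distinct i, j, and moreover d(X_i, X_j) ∩ d(X_k, X_l) = ∅ for all distinct pairs {i,j}, {k,l} ∈ [ω]². Let 𝒰 be a metrically Ramsey ultrafilter on X such that ⋃_{n<ω} X_n ∈ 𝒰 and X_n ∉ 𝒰 for each n < ω. Then there exists a mapping φ : X → ω such that the image ultrafilter φ(𝒰) is a Ramsey (selective) ultrafilter on ω. -/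
/-- A free ultrafilter on `ℕ` is Ramsey (selective) if every symmetric
`{0,1}`-coloring of pairs has a monochrome member. -/
def IsRamseyUltrafilter (𝒱 : Ultrafilter ℕ) : Prop :=
  (∀ n : ℕ, 𝒱 ≠ pure n) ∧
  ∀ χ : ℕ → ℕ → Bool, (∀ a b, χ a b = χ b a) →
    ∃ V ∈ 𝒱, ∃ k : Bool, ∀ x ∈ V, ∀ y ∈ V, x ≠ y → χ x y = k

/-!
Send each point of `⋃ n, Xs n` to the index of its piece. A distance between two distinct
pieces determines the unordered pair of pieces, so every symmetric coloring of pairs of indices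
lifts to an isometric coloring of `X`; a monochrome member of `𝒰` for the lift is mapped onto a
monochrome member of `φ(𝒰)`. The image is free because no single piece belongs to `𝒰`.
-/

open Set Filter Function

section Pieces

variable {X ι : Type*} {Xs : ι → Set X}

/-- Off `⋃ i, Xs i` the value is arbitrary. -/
noncomputable def pieceIndex [Nonempty ι] (Xs : ι → Set X) (x : X) : ι :=
  Classical.epsilon fun i => x ∈ Xs i

theorem pieceIndex_eq [Nonempty ι] (hdisj : Pairwise (Disjoint on Xs)) {x : X} {i : ι}
    (hx : x ∈ Xs i) : pieceIndex Xs x = i := by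
  by_contra hne
  have hmem : x ∈ Xs (pieceIndex Xs x) := Classical.epsilon_spec (p := (x ∈ Xs ·)) ⟨i, hx⟩
  exact (hdisj hne).ne_of_mem hmem hx rfl

theorem map_pieceIndex_ne_pure [Nonempty ι] (hdisj : Pairwise (Disjoint on Xs))
    {𝒰 : Ultrafilter X} (hunion : (⋃ i, Xs i) ∈ 𝒰) (hnot : ∀ i, Xs i ∉ 𝒰)
    (i : ι) :
    𝒰.map (pieceIndex Xs) ≠ pure i := by
  intro h
  have hfiber : pieceIndex Xs ⁻¹' {i} ∈ 𝒰 := by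
    rw [← Ultrafilter.mem_map, h]
    exact Ultrafilter.mem_pure.2 rfl
  refine hnot i (mem_of_superset (inter_mem hfiber hunion) ?_)
  rintro x ⟨hxi, hx⟩
  obtain ⟨j, hxj⟩ := mem_iUnion.mp hx
  rw [mem_preimage, mem_singleton_iff, pieceIndex_eq hdisj hxj] at hxi
  exact hxi ▸ hxj

variable [MetricSpace X]

theorem exists_coloring_distSet
    (hdist2 : ∀ i j k l, i ≠ j → k ≠ l → ({i, j} : Set ι) ≠ {k, l} →
      distSet (Xs i) (Xs j) ∩ distSet (Xs k) (Xs l) = ∅)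
    (χ : ι → ι → Bool) (hsym : ∀ i j, χ i j = χ j i) :
    ∃ g : ℝ → Bool, ∀ i j, i ≠ j → ∀ r ∈ distSet (Xs i) (Xs j), g r = χ i j := by
  classical
  let P (r : ℝ) : Prop := ∃ p : ι × ι, p.1 ≠ p.2 ∧ r ∈ distSet (Xs p.1) (Xs p.2)
  refine ⟨fun r => if h : P r then χ h.choose.1 h.choose.2 else false, ?_⟩
  intro i j hij r hr
  have h : P r := ⟨(i, j), hij, hr⟩
  obtain ⟨hne, hr'⟩ := h.choose_spec
  simp only [dif_pos h]
  by_cases hpair : ({h.choose.1, h.choose.2} : Set ι) = {i, j}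
  · rcases Set.pair_eq_pair_iff.mp hpair with ⟨h1, h2⟩ | ⟨h1, h2⟩
    · rw [h1, h2]
    · rw [h1, h2, hsym]
  · have hr_inter : r ∈ distSet _ _ ∩ distSet (Xs i) (Xs j) := ⟨hr', hr⟩
    rw [hdist2 _ _ i j hne hij hpair] at hr_inter
    exact hr_inter.elim

theorem exists_mem_map_pieceIndex_monochromeOn [Nonempty ι]
    (hdisj : Pairwise (Disjoint on Xs))
    (hdist2 : ∀ i j k l, i ≠ j → k ≠ l → ({i, j} : Set ι) ≠ {k, l} →
      distSet (Xs i) (Xs j) ∩ distSet (Xs k) (Xs l) = ∅)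
    {𝒰 : Ultrafilter X} (hMR : MetricallyRamsey 𝒰) (hunion : (⋃ i, Xs i) ∈ 𝒰)
    (χ : ι → ι → Bool) (hsym : ∀ i j, χ i j = χ j i) :
    ∃ V ∈ 𝒰.map (pieceIndex Xs), MonochromeOn χ V := by
  obtain ⟨g, hg⟩ := exists_coloring_distSet hdist2 χ hsym
  obtain ⟨U, hU, k, hk⟩ := hMR (fun x y => g (dist x y)) fun _ _ _ _ h => congrArg g h
  refine ⟨pieceIndex Xs '' (U ∩ ⋃ i, Xs i), ?_, k, ?_⟩
  · exact Ultrafilter.mem_map.2 <|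
      mem_of_superset (inter_mem hU hunion) (subset_preimage_image _ _)
  · rintro _ ⟨x, ⟨hxU, hx⟩, rfl⟩ _ ⟨y, ⟨hyU, hy⟩, rfl⟩ hne
    obtain ⟨i, hxi⟩ := mem_iUnion.mp hx
    obtain ⟨j, hyj⟩ := mem_iUnion.mp hy
    rw [pieceIndex_eq hdisj hxi, pieceIndex_eq hdisj hyj] at hne ⊢
    rw [← hg i j hne _ ⟨x, hxi, y, hyj, rfl⟩]
    exact hk x hxU y hyU ((hdisj hne).ne_of_mem hxi hyj)

end Pieces

theorem stmt8_general {X : Type*} [MetricSpace X] (Xs : ℕ → Set X)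
    (hdisj : ∀ i j, i ≠ j → Disjoint (Xs i) (Xs j))
    (hdist2 : ∀ i j k l, i ≠ j → k ≠ l → ({i, j} : Set ℕ) ≠ {k, l} →
      distSet (Xs i) (Xs j) ∩ distSet (Xs k) (Xs l) = ∅)
    (𝒰 : Ultrafilter X)
    (hMR : MetricallyRamsey 𝒰)
    (hunion : (⋃ n, Xs n) ∈ 𝒰) (hnot : ∀ n, Xs n ∉ 𝒰) :
    ∃ φ : X → ℕ, IsRamseyUltrafilter (Ultrafilter.map φ 𝒰) :=
  ⟨pieceIndex Xs, map_pieceIndex_ne_pure (fun i j => hdisj i j) hunion hnot,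
    exists_mem_map_pieceIndex_monochromeOn (fun i j => hdisj i j) hdist2 hMR hunion⟩

/-- Proposition 1.6(ii): if moreover distinct pairs of pieces have disjoint
cross-distance sets, then some map `φ : X → ω` pushes `𝒰` to a Ramsey
(selective) ultrafilter on `ω`. -/
theorem stmt8 {X : Type*} [MetricSpace X] [Infinite X] (Xs : ℕ → Set X)
    (hne : ∀ n, (Xs n).Nonempty)
    (hdisj : ∀ i j, i ≠ j → Disjoint (Xs i) (Xs j))
    (hdist : ∀ n i j, i ≠ j → distSet (Xs i) (Xs j) ∩ distSet (Xs n) (Xs n) = ∅)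
    (hdist2 : ∀ i j k l, i ≠ j → k ≠ l → ({i, j} : Set ℕ) ≠ {k, l} →
      distSet (Xs i) (Xs j) ∩ distSet (Xs k) (Xs l) = ∅)
    (𝒰 : Ultrafilter X) (hfree : IsFreeUltrafilter 𝒰)
    (hMR : MetricallyRamsey 𝒰)
    (hunion : (⋃ n, Xs n) ∈ 𝒰) (hnot : ∀ n, Xs n ∉ 𝒰) :
    ∃ φ : X → ℕ, IsRamseyUltrafilter (Ultrafilter.map φ 𝒰) :=
  stmt8_general Xs hdisj hdist2 𝒰 hMR hunion hnot
end

section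
/- Let (X,d) be an infinite metric space and let {X_n : n ∈ ω} be a family of nonempty pairwise disjoint subsets of X such that d(X_i, X_j) ∩ d(X_n, X_n) = ∅ for all n and all distinct i, j. If for each n < ω there exists m < ω with m > n and |X_m| > n, then there exists a free ultrafilter 𝒱 on X such that ⋃_{n<ω} X_n ∈ 𝒱 and 𝒱 is not metrically Ramsey. -/
/-!
Call `V ⊆ X` thin if, outside finitely many pieces `Xs m`, it meets every piece in at most `k`
points for a fixed `k`. Thin sets form an ideal, and the union of the pieces is not thin because
the pieces have unbounded sizes, so some ultrafilter contains the union and no thin set; it is free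
since singletons are thin. Colour a pair by whether its distance occurs inside a single piece.
A member `U` of the ultrafilter is not thin, so it has two points in one piece and a point in
another piece; the first pair gets colour `true`, while a pair across two pieces gets `false`
because cross-distances never occur inside a piece.
-/

universe u

open Filter Cardinal

theorem Ultrafilter.exists_mem_forall_mem_not {α : Type*} (p : Set α → Prop) (he : p ∅)
    (hmono : ∀ t, p t → ∀ s ⊆ t, p s) (hunion : ∀ s, p s → ∀ t, p t → p (s ∪ t))
    {s : Set α} (hs : ¬ p s) : ∃ 𝒰 : Ultrafilter α, s ∈ 𝒰 ∧ ∀ t ∈ 𝒰, ¬ p t := by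
  have : (comk p he hmono hunion ⊓ 𝓟 s).NeBot := by
    refine inf_principal_neBot_iff.2 fun t ht => ?_
    by_contra hts
    exact hs (hmono _ ht s fun x hxs hxt => hts ⟨x, hxt, hxs⟩)
  obtain ⟨𝒰, h𝒰⟩ := Ultrafilter.exists_le (comk p he hmono hunion ⊓ 𝓟 s)
  refine ⟨𝒰, h𝒰 (mem_inf_of_right (mem_principal_self s)), fun t ht hpt => ?_⟩
  have htc : tᶜ ∈ 𝒰 := h𝒰 (mem_inf_of_left (show p tᶜᶜ by rwa [compl_compl]))
  exact Ultrafilter.compl_notMem_iff.2 ht htc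

section Thin

variable {X ι : Type*} (Xs : ι → Set X)

def IsThin (V : Set X) : Prop :=
  ∃ k : ℕ, ∀ᶠ m in cofinite, #(V ∩ Xs m : Set X) ≤ k

variable {Xs}

theorem isThin_empty : IsThin Xs ∅ := ⟨0, by simp⟩

theorem isThin_singleton (x : X) : IsThin Xs {x} :=
  ⟨1, .of_forall fun m => by
    simpa using mk_le_mk_of_subset (Set.inter_subset_left : {x} ∩ Xs m ⊆ {x})⟩

theorem IsThin.mono {V W : Set X} (hW : IsThin Xs W) (hVW : V ⊆ W) : IsThin Xs V := by
  obtain ⟨k, hk⟩ := hW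
  exact ⟨k, hk.mono fun m hm => (mk_le_mk_of_subset (Set.inter_subset_inter_left _ hVW)).trans hm⟩

theorem IsThin.union {V W : Set X} (hV : IsThin Xs V) (hW : IsThin Xs W) :
    IsThin Xs (V ∪ W) := by
  obtain ⟨k, hk⟩ := hV
  obtain ⟨l, hl⟩ := hW
  refine ⟨k + l, (hk.and hl).mono fun m ⟨hkm, hlm⟩ => ?_⟩
  calc #((V ∪ W) ∩ Xs m : Set X) = #((V ∩ Xs m) ∪ (W ∩ Xs m) : Set X) := by
        rw [Set.union_inter_distrib_right]
    _ ≤ #(V ∩ Xs m : Set X) + #(W ∩ Xs m : Set X) := mk_union_le _ _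
    _ ≤ k + l := add_le_add hkm hlm
    _ = (k + l : ℕ) := by push_cast; rfl

theorem exists_lt_mk_inter_of_not_isThin {V : Set X} (hV : ¬ IsThin Xs V) (k : ℕ) :
    ∃ᶠ m in cofinite, (k : Cardinal) < #(V ∩ Xs m : Set X) := by
  by_contra h
  exact hV ⟨k, (not_frequently.1 h).mono fun _ => le_of_not_gt⟩

end Thin

theorem not_isThin_iUnion {X : Type u} {Xs : ℕ → Set X}
    (hbig : ∀ n : ℕ, ∃ m : ℕ, n < m ∧ (n : Cardinal.{u}) < #(Xs m)) :
    ¬ IsThin Xs (⋃ n, Xs n) := by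
  rintro ⟨k, hk⟩
  obtain ⟨N, hN⟩ := eventually_atTop.1 (Nat.cofinite_eq_atTop ▸ hk)
  obtain ⟨m, hm, hcard⟩ := hbig (max k N)
  have hXs : #((⋃ n, Xs n) ∩ Xs m : Set X) = #(Xs m) := by
    rw [Set.inter_eq_right.2 (Set.subset_iUnion Xs m)]
  have hkN : (k : Cardinal) ≤ (max k N : ℕ) := by exact_mod_cast le_max_left k N
  exact (hN m (by omega)).not_gt (hXs ▸ hkN.trans_lt hcard)

section Coloring

open scoped Classical

variable {X : Type*} [MetricSpace X] {ι : Type*} (Xs : ι → Set X)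

noncomputable def insideColoring (x y : X) : Bool :=
  decide (dist x y ∈ ⋃ n, distSet (Xs n) (Xs n))

theorem isIsometricColoring_insideColoring : IsIsometricColoring (insideColoring Xs) := by
  intro x y z t h
  rw [insideColoring, insideColoring, h]

variable {Xs}

theorem insideColoring_of_mem {n : ι} {x y : X} (hx : x ∈ Xs n) (hy : y ∈ Xs n) :
    insideColoring Xs x y = true :=
  decide_eq_true (Set.mem_iUnion.2 ⟨n, x, hx, y, hy, rfl⟩)

theorem insideColoring_of_mem_of_ne
    (hdist : ∀ n i j, i ≠ j → distSet (Xs i) (Xs j) ∩ distSet (Xs n) (Xs n) = ∅)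
    {i j : ι} (hij : i ≠ j) {x y : X} (hx : x ∈ Xs i) (hy : y ∈ Xs j) :
    insideColoring Xs x y = false := by
  refine decide_eq_false fun hxy => ?_
  obtain ⟨n, hn⟩ := Set.mem_iUnion.1 hxy
  exact (hdist n i j hij).subset ⟨⟨x, hx, y, hy, rfl⟩, hn⟩

theorem not_monochromeOn_insideColoring
    (hdist : ∀ n i j, i ≠ j → distSet (Xs i) (Xs j) ∩ distSet (Xs n) (Xs n) = ∅)
    {U : Set X} (hU : ¬ IsThin Xs U) : ¬ MonochromeOn (insideColoring Xs) U := by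
  rintro ⟨c, hc⟩
  obtain ⟨i, hi⟩ := (exists_lt_mk_inter_of_not_isThin hU 1).exists
  obtain ⟨j, hj, hji⟩ :=
    ((exists_lt_mk_inter_of_not_isThin hU 0).and_eventually (eventually_cofinite_ne i)).exists
  obtain ⟨⟨x, hxU, hxi⟩, ⟨y, hyU, hyi⟩, hxy⟩ :=
    one_lt_iff_nontrivial.1 (by exact_mod_cast hi : 1 < #(U ∩ Xs i : Set X))
  obtain ⟨⟨z, hzU, hzj⟩⟩ := mk_ne_zero_iff.1 (by exact_mod_cast hj.ne')
  have hxz : insideColoring Xs x z = false := insideColoring_of_mem_of_ne hdist hji.symm hxi hzj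
  -- `x ≠ z`, as the pair `(x, x)` sits inside a piece
  have hxz_ne : x ≠ z := by
    rintro rfl
    simp [insideColoring_of_mem hxi hxi] at hxz
  have hxy_ne : x ≠ y := fun h => hxy (Subtype.ext h)
  have := (hc x hxU y hyU hxy_ne).trans (hc x hxU z hzU hxz_ne).symm
  simp [insideColoring_of_mem hxi hyi, hxz] at this

end Coloring

theorem stmt9_general {X : Type u} [MetricSpace X] (Xs : ℕ → Set X)
    (hdist : ∀ n i j, i ≠ j → distSet (Xs i) (Xs j) ∩ distSet (Xs n) (Xs n) = ∅)
    (hbig : ∀ n : ℕ, ∃ m : ℕ, n < m ∧ (n : Cardinal.{u}) < Cardinal.mk (Xs m)) :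
    ∃ 𝒱 : Ultrafilter X, IsFreeUltrafilter 𝒱 ∧ (⋃ n, Xs n) ∈ 𝒱 ∧
      ¬ MetricallyRamsey 𝒱 := by
  obtain ⟨𝒱, hY, h𝒱⟩ := Ultrafilter.exists_mem_forall_mem_not (IsThin Xs) isThin_empty
    (fun _ ht _ hst => ht.mono hst) (fun _ hs _ ht => hs.union ht) (not_isThin_iUnion hbig)
  refine ⟨𝒱, fun x hx => h𝒱 {x} (hx ▸ Ultrafilter.mem_pure.2 rfl) (isThin_singleton x), hY, ?_⟩
  intro hRamsey
  obtain ⟨U, hU, hmono⟩ := hRamsey _ (isIsometricColoring_insideColoring Xs)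
  exact not_monochromeOn_insideColoring hdist (h𝒱 U hU) hmono

/-- Proposition 1.6(iii): if the pieces have unbounded sizes, there is a free
ultrafilter containing the union which is not metrically Ramsey. -/
theorem stmt9 {X : Type u} [MetricSpace X] [Infinite X] (Xs : ℕ → Set X)
    (hne : ∀ n, (Xs n).Nonempty)
    (hdisj : ∀ i j, i ≠ j → Disjoint (Xs i) (Xs j))
    (hdist : ∀ n i j, i ≠ j → distSet (Xs i) (Xs j) ∩ distSet (Xs n) (Xs n) = ∅)
    (hbig : ∀ n : ℕ, ∃ m : ℕ, n < m ∧ (n : Cardinal.{u}) < Cardinal.mk (Xs m)) :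
    ∃ 𝒱 : Ultrafilter X, IsFreeUltrafilter 𝒱 ∧ (⋃ n, Xs n) ∈ 𝒱 ∧
      ¬ MetricallyRamsey 𝒱 :=
  stmt9_general Xs hdist hbig
end

section
/- For every infinite ultrametric space (X,d) there exists a countably infinite subset Y of X such that every free ultrafilter 𝒰 on X with Y ∈ 𝒰 is metrically Ramsey. -/
/-!
If every point sees only finitely many distances, pigeonhole builds a comb `y₀, y₁, …` with
`dist yᵢ yⱼ = dist yᵢ yᵢ₊₁` for `i < j`. Otherwise some point `a` sees infinitely many distances;
points `zᵢ` at pairwise different distances from `a` satisfy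
`dist zᵢ zⱼ = max (dist zᵢ a) (dist a zⱼ)`, since ultrametric triangles are isosceles.
Either way each `yᵢ` has a partner `pᵢ` such that every pair `{yᵢ, yⱼ}` lies at distance
`dist yᵢ pᵢ` or `dist yⱼ pⱼ`. An isometric coloring `χ` then gives each pair the color
`f i := χ yᵢ pᵢ` of one of its indices, so both sets `{yᵢ | f i = k}` are monochrome, and the
ultrafilter contains one of them.
-/

open Set Function

section

variable {X : Type*}

def HasOneSidedDists [Dist X] (y p : ℕ → X) : Prop :=
  ∀ i j, i ≠ j → dist (y i) (y j) = dist (y i) (p i) ∨ dist (y i) (y j) = dist (y j) (p j)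

lemma HasOneSidedDists.of_lt [PseudoMetricSpace X] {y p : ℕ → X}
    (h : ∀ i j, i < j → dist (y i) (y j) = dist (y i) (p i)) : HasOneSidedDists y p := by
  intro i j hij
  rcases hij.lt_or_gt with hlt | hgt
  · exact .inl (h i j hlt)
  · exact .inr (by rw [dist_comm, h j i hgt])

theorem HasOneSidedDists.exists_monochrome_mem [MetricSpace X] {y p : ℕ → X}
    (h : HasOneSidedDists y p) {χ : X → X → Bool} (hχ : IsIsometricColoring χ) {𝒰 : Ultrafilter X}
    (hy : range y ∈ 𝒰) : ∃ U ∈ 𝒰, MonochromeOn χ U := by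
  set f : ℕ → Bool := fun i => χ (y i) (p i)
  have hmono : ∀ k, MonochromeOn χ (y '' {i | f i = k}) := by
    intro k
    refine ⟨k, ?_⟩
    rintro _ ⟨i, hi, rfl⟩ _ ⟨j, hj, rfl⟩ hne
    rcases h i j (ne_of_apply_ne y hne) with hd | hd
    · exact (hχ _ _ _ _ hd).trans hi
    · exact (hχ _ _ _ _ hd).trans hj
  have hcover : range y ⊆ y '' {i | f i = true} ∪ y '' {i | f i = false} := by
    rintro _ ⟨i, rfl⟩
    cases hi : f i
    · exact .inr ⟨i, hi, rfl⟩
    · exact .inl ⟨i, hi, rfl⟩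
  rcases Ultrafilter.union_mem_iff.mp (Filter.mem_of_superset hy hcover) with htrue | hfalse
  · exact ⟨_, htrue, hmono true⟩
  · exact ⟨_, hfalse, hmono false⟩

theorem Set.Infinite.exists_infinite_inter_preimage_singleton {α β : Type*} {S : Set α}
    (hS : S.Infinite) {f : α → β} (hf : (f '' S).Finite) : ∃ b, (S ∩ f ⁻¹' {b}).Infinite := by
  by_contra! hfib
  refine hS ((hf.biUnion fun b _ => hfib b).subset fun x hx => ?_)
  exact mem_biUnion (mem_image_of_mem f hx) ⟨hx, rfl⟩

lemma exists_infinite_subset_dist_eq_of_finite_range_dist [Dist X]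
    (hfin : ∀ a : X, (range (dist a)).Finite) {S : Set X} (hS : S.Infinite) :
    ∃ a ∈ S, ∃ T ⊆ S \ {a}, T.Infinite ∧ ∃ r, ∀ x ∈ T, dist a x = r := by
  obtain ⟨a, ha⟩ := hS.nonempty
  obtain ⟨r, hr⟩ := (hS.sdiff (finite_singleton a)).exists_infinite_inter_preimage_singleton
    ((hfin a).subset (image_subset_range _ _))
  exact ⟨a, ha, _, inter_subset_left, hr, r, fun x hx => hx.2⟩

theorem exists_hasOneSidedDists_of_finite_range_dist [PseudoMetricSpace X] [Infinite X]
    (hfin : ∀ a : X, (range (dist a)).Finite) :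
    ∃ y p : ℕ → X, Injective y ∧ HasOneSidedDists y p := by
  choose pt hpt T hT hTinf r hr using
    fun S : {S : Set X // S.Infinite} =>
      exists_infinite_subset_dist_eq_of_finite_range_dist hfin S.2
  let F : ℕ → {S : Set X // S.Infinite} := fun n =>
    (fun S => ⟨T S, hTinf S⟩)^[n] ⟨univ, infinite_univ⟩
  let y : ℕ → X := fun n => pt (F n)
  have hF_succ : ∀ n, (F (n + 1)).1 = T (F n) := fun n => by
    simp only [F, iterate_succ_apply']
  have hF_anti : Antitone fun n => (F n).1 := antitone_nat_of_succ_le fun n =>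
    (hF_succ n).trans_subset ((hT _).trans sdiff_subset)
  have hmem : ∀ n m, n < m → y m ∈ T (F n) := fun n m hnm =>
    hF_succ n ▸ hF_anti (Nat.succ_le_of_lt hnm) (hpt (F m))
  have hdist : ∀ n m, n < m → dist (y n) (y m) = dist (y n) (y (n + 1)) := fun n m hnm =>
    (hr _ _ (hmem n m hnm)).trans (hr _ _ (hmem n (n + 1) n.lt_succ_self)).symm
  refine ⟨y, fun n => y (n + 1), Injective.of_lt_imp_ne fun (n m : ℕ) hnm => ?_, .of_lt hdist⟩
  exact fun he => ((hT _) (hmem n m hnm)).2 he.symm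

theorem exists_hasOneSidedDists_of_infinite_range_dist [PseudoMetricSpace X]
    [IsUltrametricDist X] {a : X} (ha : (range (dist a)).Infinite) :
    ∃ y p : ℕ → X, Injective y ∧ HasOneSidedDists y p := by
  choose z hz using fun n => (ha.natEmbedding _ n).2
  have hdist_inj : Injective (dist a ∘ z) := fun i j hij =>
    (ha.natEmbedding _).injective (Subtype.ext ((hz i).symm.trans (hij.trans (hz j))))
  refine ⟨z, fun _ => a, hdist_inj.of_comp, fun i j hij => ?_⟩
  have hiso := IsUltrametricDist.dist_eq_max_of_dist_ne_dist (z i) a (z j)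
    (by rw [dist_comm]; exact hdist_inj.ne hij)
  rcases max_choice (dist (z i) a) (dist a (z j)) with hmax | hmax
  · exact .inl (hiso.trans hmax)
  · exact .inr (by rw [hiso, hmax, dist_comm])

theorem exists_hasOneSidedDists [PseudoMetricSpace X] [IsUltrametricDist X] [Infinite X] :
    ∃ y p : ℕ → X, Injective y ∧ HasOneSidedDists y p := by
  by_cases hfin : ∀ a : X, (range (dist a)).Finite
  · exact exists_hasOneSidedDists_of_finite_range_dist hfin
  · obtain ⟨a, ha⟩ := not_forall.mp hfin
    exact exists_hasOneSidedDists_of_infinite_range_dist ha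

end

/-- Proposition 2.1: every infinite ultrametric space has a countably infinite
subset `Y` such that every free ultrafilter containing `Y` is metrically
Ramsey. -/
theorem stmt11 {X : Type*} [MetricSpace X] [Infinite X]
    (hultra : ∀ x y z : X, dist x z ≤ max (dist x y) (dist y z)) :
    ∃ Y : Set X, Y.Countable ∧ Y.Infinite ∧
      ∀ 𝒰 : Ultrafilter X, IsFreeUltrafilter 𝒰 → Y ∈ 𝒰 →
        MetricallyRamsey 𝒰 := by
  have : IsUltrametricDist X := ⟨hultra⟩
  obtain ⟨y, p, hy, hyp⟩ := exists_hasOneSidedDists (X := X)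
  exact ⟨range y, countable_range y, infinite_range_of_injective hy,
    fun _ _ hY _ hχ => hyp.exists_monochrome_mem hχ hY⟩
end

section
/- Let 𝒰 be a metrically Ramsey ultrafilter on ℕ (with the metric d(x,y) = |x−y|) and let f : ℕ → ℕ be a mapping such that f(x) > x for each x ∈ ℕ. Then there exists a member U ∈ 𝒰 containing no subset of the form {a, a+x, a+f(x)} with a, x ∈ ℕ, x ≥ 1. -/
/-!
The graph joining each `x` to `f x` is a forest, since every vertex has at most one neighbour
above it; hence it has a 2-coloring `c` with `c (f x) ≠ c x`. Coloring a pair by `c` of its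
distance is isometric, and in a monochrome member of `𝒰` a triple `{a, a + x, a + f x}` would
force `c x = c (f x)`.
-/

/-- A `{0,1}`-coloring of pairs of naturals is isometric if it only depends on
the distance `|x - y|`. -/
def IsIsometricColoringNat (χ : ℕ → ℕ → Bool) : Prop :=
  ∀ x y z t : ℕ, dist x y = dist z t → χ x y = χ z t

/-- An ultrafilter on `ℕ` is metrically Ramsey (for the metric `|x - y|`) if
every isometric coloring has a monochrome member. -/
def MetricallyRamseyNat (𝒰 : Ultrafilter ℕ) : Prop :=
  ∀ χ : ℕ → ℕ → Bool, IsIsometricColoringNat χ →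
    ∃ U ∈ 𝒰, ∃ k : Bool, ∀ x ∈ U, ∀ y ∈ U, x ≠ y → χ x y = k

namespace SimpleGraph

theorem isAcyclic_of_adj_lt_unique {V : Type*} [LinearOrder V] {G : SimpleGraph V}
    (h : ∀ ⦃v u w⦄, G.Adj v u → G.Adj v w → v < u → v < w → u = w) : G.IsAcyclic := by
  -- Rotated to start at its least vertex, a cycle has two distinct neighbours above it.
  intro v c hc
  have hne : c.support.toFinset.Nonempty := ⟨v, by simp⟩
  set u := c.support.toFinset.min' hne
  have hu : u ∈ c.support := List.mem_toFinset.1 (Finset.min'_mem _ hne)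
  set c' := c.rotate u hu
  have hc' : c'.IsCycle := hc.rotate hu
  have hmin : ∀ w ∈ c'.support, u ≤ w := fun w hw =>
    Finset.min'_le _ _ (List.mem_toFinset.2 ((c.mem_support_rotate_iff u hu).1 hw))
  have hsnd := c'.adj_snd hc'.not_nil
  have hpen := (c'.adj_penultimate hc'.not_nil).symm
  refine hc'.snd_ne_penultimate (h hsnd hpen ?_ ?_)
  · exact (hmin _ (c'.getVert_mem_support 1)).lt_of_ne hsnd.ne
  · exact (hmin _ (c'.getVert_mem_support _)).lt_of_ne hpen.ne

end SimpleGraph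

theorem exists_bool_apply_ne_of_lt_self {α : Type*} [LinearOrder α] (f : α → α)
    (hf : ∀ x, x < f x) : ∃ c : α → Bool, ∀ x, c (f x) ≠ c x := by
  set G := SimpleGraph.fromRel fun x y => f x = y
  have hup : ∀ ⦃v u⦄, G.Adj v u → v < u → u = f v := by
    rintro v u ⟨-, h | h⟩ hvu
    · exact h.symm
    · exact absurd (h ▸ hf u) hvu.not_gt
  have hG : G.IsAcyclic := SimpleGraph.isAcyclic_of_adj_lt_unique fun v u w hu hw hvu hvw =>
    (hup hu hvu).trans (hup hw hvw).symm
  refine ⟨fun x => finTwoEquiv (hG.coloringTwo x), fun x h => ?_⟩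
  have hadj : G.Adj (f x) x := ⟨(hf x).ne', .inr rfl⟩
  exact hG.coloringTwo.valid hadj (finTwoEquiv.injective h)

theorem natFloor_dist_self_add (a x : ℕ) : ⌊dist a (a + x)⌋₊ = x := by
  rw [Nat.dist_eq, Nat.cast_add, sub_add_cancel_left, abs_neg, Nat.abs_cast, Nat.floor_natCast]

theorem MetricallyRamseyNat.exists_mem_color_dist_eq {𝒰 : Ultrafilter ℕ}
    (h𝒰 : MetricallyRamseyNat 𝒰) (c : ℕ → Bool) :
    ∃ U ∈ 𝒰, ∃ k, ∀ a x, 1 ≤ x → a ∈ U → a + x ∈ U → c x = k := by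
  obtain ⟨U, hU, k, hk⟩ := h𝒰 (fun u v => c ⌊dist u v⌋₊) fun x y z t h => by simp only [h]
  refine ⟨U, hU, k, fun a x hx ha hax => ?_⟩
  simpa only [natFloor_dist_self_add] using hk a ha (a + x) hax (by omega)

theorem stmt14_general (𝒰 : Ultrafilter ℕ)
    (hMR : MetricallyRamseyNat 𝒰) (f : ℕ → ℕ) (hf : ∀ x : ℕ, x < f x) :
    ∃ U ∈ 𝒰, ∀ a x : ℕ, 1 ≤ x → ¬ ({a, a + x, a + f x} : Set ℕ) ⊆ U := by
  obtain ⟨c, hc⟩ := exists_bool_apply_ne_of_lt_self f hf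
  obtain ⟨U, hU, k, hk⟩ := hMR.exists_mem_color_dist_eq c
  refine ⟨U, hU, fun a x hx hsub => hc x ?_⟩
  have ha : a ∈ U := hsub (by simp)
  have hax : a + x ∈ U := hsub (by simp)
  have hafx : a + f x ∈ U := hsub (by simp)
  rw [hk a x hx ha hax, hk a (f x) (by have := hf x; omega) ha hafx]

/-- Proposition 3.1: if `𝒰` is a metrically Ramsey ultrafilter on `ℕ` and
`f x > x` for all `x`, then some member of `𝒰` contains no subset of the form
`{a, a + x, a + f x}` with `x ≥ 1`. -/
theorem stmt14 (𝒰 : Ultrafilter ℕ) (hfree : ∀ n : ℕ, 𝒰 ≠ pure n)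
    (hMR : MetricallyRamseyNat 𝒰) (f : ℕ → ℕ) (hf : ∀ x : ℕ, x < f x) :
    ∃ U ∈ 𝒰, ∀ a x : ℕ, 1 ≤ x → ¬ ({a, a + x, a + f x} : Set ℕ) ⊆ U :=
  stmt14_general 𝒰 hMR f hf
end

section
/- Every metrically Ramsey ultrafilter 𝒰 on ℕ (with the metric d(x,y) = |x−y|) has a member U ∈ 𝒰 containing no three-term arithmetic progression, i.e., no subset of the form {a, a+x, a+2x} with a, x ∈ ℕ, x ≥ 1. -/
lemma dist_eq_cast_natDist (x y : ℕ) : dist x y = (Nat.dist x y : ℝ) := by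
  rw [Nat.dist_eq]
  rcases le_total x y with h | h
  · rw [abs_sub_comm, abs_of_nonneg (sub_nonneg.mpr (Nat.cast_le.mpr h)),
      Nat.dist_eq_sub_of_le h, Nat.cast_sub h]
  · rw [abs_of_nonneg (sub_nonneg.mpr (Nat.cast_le.mpr h)),
      Nat.dist_eq_sub_of_le_right h, Nat.cast_sub h]

lemma isIsometricColoringNat_comp_natDist (c : ℕ → Bool) :
    IsIsometricColoringNat (fun x y => c (Nat.dist x y)) := by
  intro x y z t h
  rw [dist_eq_cast_natDist, dist_eq_cast_natDist] at h
  simp only [Nat.cast_injective h]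

lemma Nat.dist_self_add_right (a x : ℕ) : Nat.dist a (a + x) = x := by
  rw [Nat.dist_eq_sub_of_le (Nat.le_add_right a x), Nat.add_sub_cancel_left]

lemma padicValNat_two_mul {x : ℕ} (hx : x ≠ 0) :
    padicValNat 2 (2 * x) = padicValNat 2 x + 1 := by
  rw [padicValNat.mul two_ne_zero hx, padicValNat.self one_lt_two, add_comm]

def twoAdicParityColoring (x y : ℕ) : Bool :=
  decide (Even (padicValNat 2 (Nat.dist x y)))

lemma isIsometricColoringNat_twoAdicParityColoring :
    IsIsometricColoringNat twoAdicParityColoring :=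
  isIsometricColoringNat_comp_natDist fun d => decide (Even (padicValNat 2 d))

lemma twoAdicParityColoring_ne {x : ℕ} (hx : x ≠ 0) (a : ℕ) :
    twoAdicParityColoring a (a + x) ≠ twoAdicParityColoring a (a + 2 * x) := by
  simp only [twoAdicParityColoring, Nat.dist_self_add_right, padicValNat_two_mul hx,
    Nat.even_add_one, ne_eq, decide_eq_decide]
  tauto

theorem stmt15_general (𝒰 : Ultrafilter ℕ)
    (hMR : MetricallyRamseyNat 𝒰) :
    ∃ U ∈ 𝒰, ∀ a x : ℕ, 1 ≤ x → ¬ ({a, a + x, a + 2 * x} : Set ℕ) ⊆ U := by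
  obtain ⟨U, hU, k, hmono⟩ := hMR _ isIsometricColoringNat_twoAdicParityColoring
  refine ⟨U, hU, fun a x hx hsub => twoAdicParityColoring_ne (by omega : x ≠ 0) a ?_⟩
  have ha : a ∈ U := hsub (by simp)
  rw [hmono a ha (a + x) (hsub (by simp)) (by omega),
    hmono a ha (a + 2 * x) (hsub (by simp)) (by omega)]

/-- Every metrically Ramsey ultrafilter on `ℕ` has a member containing no
three-term arithmetic progression `{a, a + x, a + 2x}` with `x ≥ 1`. -/
theorem stmt15 (𝒰 : Ultrafilter ℕ) (hfree : ∀ n : ℕ, 𝒰 ≠ pure n)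
    (hMR : MetricallyRamseyNat 𝒰) :
    ∃ U ∈ 𝒰, ∀ a x : ℕ, 1 ≤ x → ¬ ({a, a + x, a + 2 * x} : Set ℕ) ⊆ U :=
  stmt15_general 𝒰 hMR
end

section
/- Let f : ℕ → ℕ be a mapping such that f(x) > x for each x ∈ ℕ. Then ℕ can be partitioned as ℕ = A₁ ∪ A₂ into two disjoint sets such that f(A₁) ⊆ A₂ and f(A₂) ⊆ A₁. -/
/-!
Put `x ~ y` when the forward orbits of `x` and `y` meet, `f^[i] x = f^[j] y`; this is an
equivalence relation and `f x ~ x`. Fix a representative `r` in each class and colour `x` by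
the parity of `i + j` for any `i, j` with `f^[i] x = f^[j] r`. When every orbit is infinite
this parity does not depend on the choice of `i, j`, and passing from `x` to `f x` changes it.
If `x < f x` for all `x`, orbits are strictly increasing, hence infinite.
-/

open Function

namespace Function

variable {α : Type*} {f : α → α}

theorem iterate_add_eq_iterate_add {x y : α} {i j : ℕ} (h : f^[i] x = f^[j] y) (k : ℕ) :
    f^[i + k] x = f^[j + k] y := by
  rw [add_comm i, add_comm j, iterate_add_apply, iterate_add_apply, h]

variable (f)

def OrbitsMeet (x y : α) : Prop :=
  ∃ i j, f^[i] x = f^[j] y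

theorem OrbitsMeet.symm {x y : α} : OrbitsMeet f x y → OrbitsMeet f y x :=
  fun ⟨i, j, h⟩ => ⟨j, i, h.symm⟩

theorem OrbitsMeet.trans {x y z : α} :
    OrbitsMeet f x y → OrbitsMeet f y z → OrbitsMeet f x z := by
  rintro ⟨i, j, hxy⟩ ⟨k, l, hyz⟩
  have hxy' := iterate_add_eq_iterate_add hxy k
  rw [add_comm j] at hxy'
  exact ⟨i + k, l + j, hxy'.trans (iterate_add_eq_iterate_add hyz j)⟩

def orbitsMeetSetoid : Setoid α where
  r := OrbitsMeet f
  iseqv := ⟨fun _ => ⟨0, 0, rfl⟩, OrbitsMeet.symm f, OrbitsMeet.trans f⟩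

noncomputable def orbitRep (x : α) : α :=
  (Quotient.mk (orbitsMeetSetoid f) x).out

theorem orbitsMeet_orbitRep (x : α) : OrbitsMeet f x (orbitRep f x) :=
  OrbitsMeet.symm f (Quotient.mk_out (s := orbitsMeetSetoid f) x)

theorem orbitRep_apply (x : α) : orbitRep f (f x) = orbitRep f x :=
  congrArg Quotient.out (Quotient.sound (s := orbitsMeetSetoid f) ⟨0, 1, rfl⟩)

noncomputable def orbitParity (x : α) : Prop :=
  Even ((orbitsMeet_orbitRep f x).choose + (orbitsMeet_orbitRep f x).choose_spec.choose)

variable {f}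

theorem add_eq_add_of_iterate_eq {x r : α} (hr : Injective fun n => f^[n] r)
    {i j i' j' : ℕ} (h : f^[i] x = f^[j] r) (h' : f^[i'] x = f^[j'] r) :
    i + j' = i' + j := by
  have hj : j + i' = j' + i := hr <| show f^[j + i'] r = f^[j' + i] r by
    rw [← iterate_add_eq_iterate_add h i', add_comm i, iterate_add_eq_iterate_add h' i]
  omega

theorem orbitParity_iff (hf : ∀ x, Injective fun n => f^[n] x) {x : α} {i j : ℕ}
    (h : f^[i] x = f^[j] (orbitRep f x)) : orbitParity f x ↔ Even (i + j) := by
  have hij := add_eq_add_of_iterate_eq (hf _)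
    (orbitsMeet_orbitRep f x).choose_spec.choose_spec h
  simp only [orbitParity, Nat.even_iff]
  omega

theorem orbitParity_apply (hf : ∀ x, Injective fun n => f^[n] x) (x : α) :
    orbitParity f (f x) ↔ ¬ orbitParity f x := by
  obtain ⟨i, j, h⟩ := orbitsMeet_orbitRep f x
  have h' : f^[i] (f x) = f^[j + 1] (orbitRep f (f x)) := by
    rw [orbitRep_apply, ← iterate_succ_apply, ← iterate_add_eq_iterate_add h 1]
  rw [orbitParity_iff hf h, orbitParity_iff hf h', ← add_assoc, Nat.even_add_one]

theorem exists_mapsTo_compl_of_injective_iterate (hf : ∀ x, Injective fun n => f^[n] x) :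
    ∃ A : Set α, Set.MapsTo f A Aᶜ ∧ Set.MapsTo f Aᶜ A :=
  ⟨{x | orbitParity f x}, fun x hx hfx => (orbitParity_apply hf x).mp hfx hx,
    fun x hx => (orbitParity_apply hf x).mpr hx⟩

end Function

theorem strictMono_iterate_of_forall_lt_apply {α : Type*} [Preorder α] {f : α → α}
    (hf : ∀ x, x < f x) (x : α) :
    StrictMono fun n => f^[n] x :=
  strictMono_nat_of_lt_succ fun n => by
    simpa only [iterate_succ_apply'] using hf (f^[n] x)

/-- If `f : ℕ → ℕ` satisfies `f x > x` for all `x`, then `ℕ` can be partitioned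
into two disjoint sets `A₁, A₂` with `f '' A₁ ⊆ A₂` and `f '' A₂ ⊆ A₁`. -/
theorem stmt16 (f : ℕ → ℕ) (hf : ∀ x : ℕ, x < f x) :
    ∃ A₁ A₂ : Set ℕ, A₁ ∪ A₂ = Set.univ ∧ A₁ ∩ A₂ = ∅ ∧
      f '' A₁ ⊆ A₂ ∧ f '' A₂ ⊆ A₁ := by
  obtain ⟨A, hA, hAc⟩ := exists_mapsTo_compl_of_injective_iterate fun x =>
    (strictMono_iterate_of_forall_lt_apply hf x).injective
  exact ⟨A, Aᶜ, Set.union_compl_self A, Set.inter_compl_self A, hA.image_subset,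
    hAc.image_subset⟩
end

section
/- Let 𝒰 be a metrically Ramsey ultrafilter on ℕ (with the metric d(x,y) = |x−y|). If there exists U ∈ 𝒰 such that |x−y| ≠ |z−t| for all distinct two-element subsets {x,y}, {z,t} of U, then 𝒰 is a Ramsey ultrafilter. -/
/-- An ultrafilter on `ℕ` is Ramsey if every symmetric `{0,1}`-coloring of pairs
has a monochrome member. -/
def IsRamseyColoringProperty (𝒰 : Ultrafilter ℕ) : Prop :=
  ∀ χ : ℕ → ℕ → Bool, (∀ a b, χ a b = χ b a) →
    ∃ U ∈ 𝒰, ∃ k : Bool, ∀ x ∈ U, ∀ y ∈ U, x ≠ y → χ x y = k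

/-! On a set `U` where distinct pairs have distinct distances, a symmetric coloring is the
restriction of an isometric one: color a distance by the color of the unique pair of `U`
realizing it. A monochrome member for that isometric coloring, intersected with `U`, is then
monochrome for the original coloring. -/

theorem exists_comp_eq_of_injOn_pairs {α β : Type*} {f : α → α → β} {U : Set α}
    (hf : ∀ x ∈ U, ∀ y ∈ U, ∀ z ∈ U, ∀ t ∈ U, x ≠ y → z ≠ t → f x y = f z t →
      ({x, y} : Set α) = {z, t})
    {χ : α → α → Bool} (hχ : ∀ a b, χ a b = χ b a) :
    ∃ g : β → Bool, ∀ x ∈ U, ∀ y ∈ U, x ≠ y → χ x y = g (f x y) := by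
  classical
  refine ⟨fun r => decide (∃ x ∈ U, ∃ y ∈ U, x ≠ y ∧ f x y = r ∧ χ x y = true), ?_⟩
  intro x hx y hy hxy
  cases hc : χ x y
  · refine (decide_eq_false ?_).symm
    rintro ⟨x', hx', y', hy', hxy', hf', hc'⟩
    rcases Set.pair_eq_pair_iff.1 (hf x' hx' y' hy' x hx y hy hxy' hxy hf') with
      ⟨rfl, rfl⟩ | ⟨rfl, rfl⟩
    · exact Bool.false_ne_true (hc ▸ hc')
    · rw [hχ, hc] at hc'
      exact Bool.false_ne_true hc'
  · exact (decide_eq_true ⟨x, hx, y, hy, hxy, rfl, hc⟩).symm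

theorem stmt17_general (𝒰 : Ultrafilter ℕ)
    (hMR : MetricallyRamseyNat 𝒰)
    (hdistinct : ∃ U ∈ 𝒰, ∀ x ∈ U, ∀ y ∈ U, ∀ z ∈ U, ∀ t ∈ U,
      x ≠ y → z ≠ t → ({x, y} : Set ℕ) ≠ {z, t} → dist x y ≠ dist z t) :
    IsRamseyColoringProperty 𝒰 := by
  obtain ⟨U, hU, hUd⟩ := hdistinct
  intro χ hχ
  obtain ⟨g, hg⟩ := exists_comp_eq_of_injOn_pairs (f := dist)
    (fun x hx y hy z hz t ht hxy hzt h =>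
      not_not.1 fun hne => hUd x hx y hy z hz t ht hxy hzt hne h) hχ
  obtain ⟨V, hV, k, hk⟩ := hMR (fun x y => g (dist x y)) fun x y z t h => congrArg g h
  refine ⟨U ∩ V, 𝒰.inter_mem hU hV, k, fun x hx y hy hxy => ?_⟩
  rw [hg x hx.1 y hy.1 hxy]
  exact hk x hx.2 y hy.2 hxy

/-- If a metrically Ramsey ultrafilter on `ℕ` has a member on which all pair
distances are distinct, then it is a Ramsey ultrafilter. -/
theorem stmt17 (𝒰 : Ultrafilter ℕ) (hfree : ∀ n : ℕ, 𝒰 ≠ pure n)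
    (hMR : MetricallyRamseyNat 𝒰)
    (hdistinct : ∃ U ∈ 𝒰, ∀ x ∈ U, ∀ y ∈ U, ∀ z ∈ U, ∀ t ∈ U,
      x ≠ y → z ≠ t → ({x, y} : Set ℕ) ≠ {z, t} → dist x y ≠ dist z t) :
    IsRamseyColoringProperty 𝒰 :=
  stmt17_general 𝒰 hMR hdistinct
end
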